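/- arXiv:1006.5520 — 9 statements merged into one kernel-verified Lean document; each statement's English description precedes it below -/
import Mathlib

section
/- Let μ be a directed distance on a finite set S and let P_μ = { p ∈ R^{S^c ∪ S^r} : p(s^c) + p(t^r) ≥ μ(s,t) for all s,t ∈ S }. For s,t ∈ S, let R_s denote the set of nonnegative points p ∈ P_μ with p(s^c) = p(s^r) = 0. Then for any p ∈ R_s and q ∈ R_t, one has D_∞(p,q) ≥ μ(s,t), where D_∞(p,q) = max( max_{u ∈ S^c} (q(u) - p(u))_+ , max_{v ∈ S^r} (p(v) - q(v))_+ ). -/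
open scoped BigOperators

/-- Points of `ℝ^{S^c ∪ S^r}` are modelled as `S ⊕ S → ℝ`, with `Sum.inl` the
column copy `S^c` and `Sum.inr` the row copy `S^r`. -/
theorem stmt_2_general {S : Type*} [Fintype S]
    (μ : S → S → ℝ)
    (s t : S) (p q : S ⊕ S → ℝ)
    (hp : ∀ u v : S, μ u v ≤ p (Sum.inl u) + p (Sum.inr v))
    (hps : p (Sum.inl s) = 0 ∧ p (Sum.inr s) = 0)
    (hqt : q (Sum.inl t) = 0 ∧ q (Sum.inr t) = 0) :
    μ s t ≤ max (⨆ u : S, max (q (Sum.inl u) - p (Sum.inl u)) 0)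
                (⨆ v : S, max (p (Sum.inr v) - q (Sum.inr v)) 0) := by
  have row_gap : μ s t ≤ p (Sum.inr t) - q (Sum.inr t) := by
    linarith [hp s t, hps.1, hqt.2]
  exact le_max_of_le_right <|
    le_ciSup_of_le (Set.finite_range _).bddAbove t (le_max_of_le_left row_gap)

/-- for `p ∈ R_s` and `q ∈ R_t` one has `D_∞(p,q) ≥ μ(s,t)`.
Points of `ℝ^{S^c ∪ S^r}` are modelled as `S ⊕ S → ℝ`, with `Sum.inl` the
column copy `S^c` and `Sum.inr` the row copy `S^r`. -/
theorem stmt_2 {S : Type*} [Fintype S] [Nonempty S]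
    (μ : S → S → ℝ) (hμ0 : ∀ s t, 0 ≤ μ s t) (hμdiag : ∀ s, μ s s = 0)
    (s t : S) (p q : S ⊕ S → ℝ)
    (hp : ∀ u v : S, μ u v ≤ p (Sum.inl u) + p (Sum.inr v))
    (hq : ∀ u v : S, μ u v ≤ q (Sum.inl u) + q (Sum.inr v))
    (hp0 : ∀ u : S ⊕ S, 0 ≤ p u) (hq0 : ∀ u : S ⊕ S, 0 ≤ q u)
    (hps : p (Sum.inl s) = 0 ∧ p (Sum.inr s) = 0)
    (hqt : q (Sum.inl t) = 0 ∧ q (Sum.inr t) = 0) :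
    μ s t ≤ max (⨆ u : S, max (q (Sum.inl u) - p (Sum.inl u)) 0)
                (⨆ v : S, max (p (Sum.inr v) - q (Sum.inr v)) 0) :=
  stmt_2_general μ s t p q hp hps hqt
end

section
/- Let μ be a directed distance on the finite set S, let (G,S,c) be a directed network with integer capacities, and let R be any subset of the nonnegative part of P_μ such that for each s ∈ S the set R_s = { p ∈ R : p(s^c) = p(s^r) = 0 } is nonempty. Then the maximum μ-weighted multiflow value MFP*(μ;G,S,c) is at most the minimum over all maps ρ : VG → R with ρ(s) ∈ R_s for every s ∈ S of ∑_{xy ∈ EG} c(xy) D_∞(ρ(x),ρ(y)). (Weak duality between the multiflow problem and the facility location problem.) -/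
/-!
Given a path `P` from `s` to `t`, the potential `x ↦ ρ x (s^c)` vanishes at `s` and,
since `ρ t ∈ P_μ` with `ρ t (t^r) = 0`, is at least `μ(s,t)` at `t`; telescoping along `P`, every
increment of this potential along an edge `xy` is at most `D_∞(ρ x, ρ y)`, so `μ(s,t)` is bounded
by the `D_∞`-length of `P`. Weighting by `λ` and regrouping edge by edge, the capacity constraints
bound the total by `∑ c(xy) D_∞(ρ x, ρ y)`.
-/

open scoped BigOperators

def edgeCount {V : Type*} [DecidableEq V] (l : List V) (x y : V) : ℕ :=
  (l.zip l.tail).count (x, y)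

section Walks

variable {V : Type*}

theorem sub_le_sum_zip_tail {G : Type*} [AddCommGroup G] [PartialOrder G]
    [IsOrderedAddMonoid G] (g : V → G) (w : V → V → G) (hw : ∀ x y, g y - g x ≤ w x y) :
    ∀ (l : List V) {a b : V}, l.head? = some a → l.getLast? = some b →
      g b - g a ≤ ((l.zip l.tail).map fun e => w e.1 e.2).sum
  | [], _, _, ha, _ => by simp at ha
  | [x], a, b, ha, hb => by
      simp only [List.head?_cons, List.getLast?_singleton, Option.some.injEq] at ha hb
      simp [← ha, ← hb]
  | x :: y :: l, a, b, ha, hb => by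
      simp only [List.head?_cons, Option.some.injEq] at ha
      subst ha
      rw [List.getLast?_cons_cons] at hb
      have ih := sub_le_sum_zip_tail g w hw (y :: l) rfl hb
      simp only [List.tail_cons, List.zip_cons_cons, List.map_cons, List.sum_cons] at ih ⊢
      calc g b - g x = (g y - g x) + (g b - g y) := by abel
        _ ≤ _ := add_le_add (hw x y) ih

theorem sum_edgeCount_mul [Fintype V] [DecidableEq V] {R : Type*} [Semiring R]
    (l : List V) (w : V → V → R) :
    ∑ x, ∑ y, (edgeCount l x y : R) * w x y = ((l.zip l.tail).map fun e => w e.1 e.2).sum := by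
  rw [← Fintype.sum_prod_type', Finset.sum_list_map_count,
    Finset.sum_subset (Finset.subset_univ (l.zip l.tail).toFinset)]
  -- `edgeCount` counts with `instBEqProd`, `Finset.sum_list_map_count` with `instBEqOfDecidableEq`
  · simp only [edgeCount, Prod.mk.eta, nsmul_eq_mul]
    congr!
  · intro e _ he
    rw [List.mem_toFinset] at he
    exact smul_eq_zero_of_left (@List.count_eq_zero _ instBEqOfDecidableEq _ _ _ |>.2 he) _

end Walks

theorem sum_mul_sum_edgeCount_le {V : Type*} [Fintype V] [DecidableEq V]
    (paths : Finset (List V)) (lam : List V → ℝ) (cap w : V → V → ℝ)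
    (hcap : ∀ x y, ∑ P ∈ paths, lam P * (edgeCount P x y : ℝ) ≤ cap x y)
    (hw : ∀ x y, 0 ≤ w x y) :
    ∑ P ∈ paths, lam P * ∑ x, ∑ y, (edgeCount P x y : ℝ) * w x y ≤ ∑ x, ∑ y, cap x y * w x y :=
  calc ∑ P ∈ paths, lam P * ∑ x, ∑ y, (edgeCount P x y : ℝ) * w x y
      = ∑ x, ∑ y, (∑ P ∈ paths, lam P * (edgeCount P x y : ℝ)) * w x y := by
        simp only [Finset.mul_sum, Finset.sum_mul, mul_assoc]
        rw [Finset.sum_comm]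
        exact Finset.sum_congr rfl fun _ _ => Finset.sum_comm
    _ ≤ ∑ x, ∑ y, cap x y * w x y :=
        Finset.sum_le_sum fun x _ => Finset.sum_le_sum fun y _ =>
          mul_le_mul_of_nonneg_right (hcap x y) (hw x y)

section DInfty

variable {S : Type*}

/-- `D_∞(p, q)`, with `Sum.inl s` and `Sum.inr s` standing for `s^c` and `s^r`. -/
noncomputable def dInfty (p q : S ⊕ S → ℝ) : ℝ :=
  max (⨆ u : S, max (q (Sum.inl u) - p (Sum.inl u)) 0)
      (⨆ v : S, max (p (Sum.inr v) - q (Sum.inr v)) 0)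

theorem dInfty_nonneg (p q : S ⊕ S → ℝ) : 0 ≤ dInfty p q :=
  le_max_of_le_left <| Real.iSup_nonneg fun _ => le_max_right _ _

theorem sub_le_dInfty [Finite S] (p q : S ⊕ S → ℝ) (u : S) :
    q (Sum.inl u) - p (Sum.inl u) ≤ dInfty p q :=
  le_max_of_le_left <| (le_max_left _ 0).trans <|
    le_ciSup (Set.finite_range fun u => max (q (Sum.inl u) - p (Sum.inl u)) 0).bddAbove u

end DInfty

/- The network is the complete digraph on `V` with capacities `c` (`c x y = 0` meaning no edge);
a multiflow is a finite set `paths` of vertex lists with weights `lam`. -/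
theorem stmt_3_general {V S : Type*} [Fintype V] [Fintype S] [DecidableEq V]
    (ι : S → V)
    (μ : S → S → ℝ)
    (c : V → V → ℕ)
    (R : Set (S ⊕ S → ℝ))
    (hR : ∀ p ∈ R, (∀ u, 0 ≤ p u) ∧ ∀ s t : S, μ s t ≤ p (Sum.inl s) + p (Sum.inr t))
    -- the multiflow
    (paths : Finset (List V)) (lam : List V → ℝ)
    (hlam : ∀ P ∈ paths, 0 ≤ lam P)
    (src dst : List V → S)
    (hpath : ∀ P ∈ paths, P.head? = some (ι (src P)) ∧
      P.getLast? = some (ι (dst P)) ∧ src P ≠ dst P ∧ P.Chain' (fun x y => 0 < c x y))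
    (hcap : ∀ x y : V, ∑ P ∈ paths, lam P * (edgeCount P x y : ℝ) ≤ (c x y : ℝ))
    -- the facility-location map
    (ρ : V → (S ⊕ S → ℝ))
    (hρS : ∀ s : S, ρ (ι s) ∈ R ∧ ρ (ι s) (Sum.inl s) = 0 ∧ ρ (ι s) (Sum.inr s) = 0) :
    ∑ P ∈ paths, lam P * μ (src P) (dst P) ≤
      ∑ x : V, ∑ y : V, (c x y : ℝ) *
        max (⨆ u : S, max (ρ y (Sum.inl u) - ρ x (Sum.inl u)) 0)
            (⨆ v : S, max (ρ x (Sum.inr v) - ρ y (Sum.inr v)) 0) := by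
  have hμ_le : ∀ s t, μ s t ≤ ρ (ι t) (Sum.inl s) - ρ (ι s) (Sum.inl s) := fun s t => by
    linarith [(hR _ (hρS t).1).2 s t, (hρS t).2.2, (hρS s).2.1]
  have hpath_le : ∀ P ∈ paths, μ (src P) (dst P) ≤
      ∑ x, ∑ y, (edgeCount P x y : ℝ) * dInfty (ρ x) (ρ y) := fun P hP => by
    rw [sum_edgeCount_mul]
    exact (hμ_le _ _).trans <| sub_le_sum_zip_tail (fun x => ρ x (Sum.inl (src P))) _
      (fun x y => sub_le_dInfty _ _ _) P (hpath P hP).1 (hpath P hP).2.1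
  calc ∑ P ∈ paths, lam P * μ (src P) (dst P)
      ≤ ∑ P ∈ paths, lam P * ∑ x, ∑ y, (edgeCount P x y : ℝ) * dInfty (ρ x) (ρ y) :=
        Finset.sum_le_sum fun P hP => mul_le_mul_of_nonneg_left (hpath_le P hP) (hlam P hP)
    _ ≤ _ := sum_mul_sum_edgeCount_le paths lam _ _ hcap fun _ _ => dInfty_nonneg _ _

/-- weak duality: the value of any μ-weighted multiflow is at most
the cost of any feasible facility-location map `ρ : VG → R ⊆ P_μ^+`.
The network is modelled by a capacity `c : V → V → ℕ` on the complete digraph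
(c x y = 0 meaning no edge); a multiflow is a finite set of paths (vertex lists)
with flow values `lam`, each path joining distinct terminals. -/
theorem stmt_3 {V S : Type*} [Fintype V] [Fintype S] [DecidableEq V] [Nonempty S]
    (ι : S → V) (hι : Function.Injective ι)
    (μ : S → S → ℝ) (hμ0 : ∀ s t, 0 ≤ μ s t) (hμdiag : ∀ s, μ s s = 0)
    (c : V → V → ℕ)
    (R : Set (S ⊕ S → ℝ))
    (hR : ∀ p ∈ R, (∀ u, 0 ≤ p u) ∧ ∀ s t : S, μ s t ≤ p (Sum.inl s) + p (Sum.inr t))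
    (hRs : ∀ s : S, ∃ p ∈ R, p (Sum.inl s) = 0 ∧ p (Sum.inr s) = 0)
    -- the multiflow
    (paths : Finset (List V)) (lam : List V → ℝ)
    (hlam : ∀ P ∈ paths, 0 ≤ lam P)
    (src dst : List V → S)
    (hpath : ∀ P ∈ paths, P.head? = some (ι (src P)) ∧
      P.getLast? = some (ι (dst P)) ∧ src P ≠ dst P ∧ P.Chain' (fun x y => 0 < c x y))
    (hcap : ∀ x y : V, ∑ P ∈ paths, lam P * (edgeCount P x y : ℝ) ≤ (c x y : ℝ))
    -- the facility-location map
    (ρ : V → (S ⊕ S → ℝ)) (hρ : ∀ x, ρ x ∈ R)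
    (hρS : ∀ s : S, ρ (ι s) ∈ R ∧ ρ (ι s) (Sum.inl s) = 0 ∧ ρ (ι s) (Sum.inr s) = 0) :
    ∑ P ∈ paths, lam P * μ (src P) (dst P) ≤
      ∑ x : V, ∑ y : V, (c x y : ℝ) *
        max (⨆ u : S, max (ρ y (Sum.inl u) - ρ x (Sum.inl u)) 0)
            (⨆ v : S, max (ρ x (Sum.inr v) - ρ y (Sum.inr v)) 0) :=
  stmt_3_general ι μ c R hR paths lam hlam src dst hpath hcap ρ hρS
end

section
/- Let μ be a directed metric on a finite set S and for p ∈ R^{S^c ∪ S^r} let Q_μ denote the set of minimal elements (with respect to the coordinatewise order) of P_μ = { p : p(s^c)+p(t^r) ≥ μ(s,t) for all s,t ∈ S }. Then for every p, q ∈ Q_μ one has D_∞^+(p^c, q^c) = D_∞^+(q^r, p^r), where p^c and p^r denote the restrictions of p to S^c and S^r respectively and D_∞^+(a,b) = max_x (b(x)-a(x))_+. -/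
/-!
A minimal point of `P_μ` is tight in every coordinate: if `p(u^c) + p(t^r) > μ(u,t)` for all `t`,
then `p(u^c)` could be lowered by the least slack. So for each `u` there is `t` with
`q(u^c) + q(t^r) = μ(u,t) ≤ p(u^c) + p(t^r)`, i.e. `q(u^c) - p(u^c) ≤ p(t^r) - q(t^r)`, which gives
`≤`; the reverse inequality is the same argument for the transposed metric.
-/

open Function

namespace DirectedMetric

variable {S : Type*} {μ : S → S → ℝ} {p q : S ⊕ S → ℝ}

/-- `Dominates μ p` says `p ∈ P_μ`. -/
def Dominates (μ : S → S → ℝ) (p : S ⊕ S → ℝ) : Prop :=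
  ∀ s t, μ s t ≤ p (.inl s) + p (.inr t)

theorem Dominates.swap (hp : Dominates μ p) : Dominates (flip μ) (p ∘ Sum.swap) :=
  fun s t => (hp t s).trans_eq (add_comm _ _)

theorem minimal_dominates_flip_swap (hp : Minimal (Dominates μ) p) :
    Minimal (Dominates (flip μ)) (p ∘ Sum.swap) := by
  refine ⟨hp.prop.swap, fun y hy hyp x => ?_⟩
  have hle : p ≤ y ∘ Sum.swap := hp.le_of_le hy.swap fun x => by simpa using hyp x.swap
  simpa using hle x.swap

theorem minimal_dominates_of_not_exists (hp : Dominates μ p)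
    (hmin : ¬ ∃ p', Dominates μ p' ∧ p' ≤ p ∧ p' ≠ p) :
    Minimal (Dominates μ) p :=
  ⟨hp, fun y hy hyp => by_contra fun hpy => hmin ⟨y, hy, hyp, fun e => hpy e.symm.le⟩⟩

theorem exists_tight_inl_of_minimal [Finite S] (hp : Minimal (Dominates μ) p) (u : S) :
    ∃ t, p (.inl u) + p (.inr t) = μ u t := by
  classical
  by_contra! hslack
  have : Nonempty S := ⟨u⟩
  obtain ⟨t₀, ht₀⟩ := Finite.exists_min fun t => p (.inl u) + p (.inr t) - μ u t
  set ε := p (.inl u) + p (.inr t₀) - μ u t₀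
  have hε : 0 < ε := sub_pos.mpr ((hp.prop u t₀).lt_of_ne (hslack t₀).symm)
  have hdom : Dominates μ (update p (.inl u) (p (.inl u) - ε)) := by
    intro s t
    by_cases hs : s = u
    · subst hs
      simp only [update_self, ne_eq, reduceCtorEq, not_false_eq_true, update_of_ne]
      linarith [ht₀ t]
    · simpa [hs] using hp.prop s t
  have := hp.le_of_le hdom (update_le_self_iff.mpr (by linarith)) (.inl u)
  simp only [update_self] at this
  linarith

theorem iSup_max_sub_inl_le_of_tight [Finite S] (hp : Dominates μ p)
    (hq : ∀ u, ∃ t, q (.inl u) + q (.inr t) = μ u t) :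
    ⨆ u, max (q (.inl u) - p (.inl u)) 0 ≤ ⨆ v, max (p (.inr v) - q (.inr v)) 0 := by
  have hbdd : BddAbove (Set.range fun v => max (p (.inr v) - q (.inr v)) 0) :=
    (Set.finite_range _).bddAbove
  refine Real.iSup_le (fun u => ?_) (Real.iSup_nonneg fun _ => le_max_right _ _)
  obtain ⟨t, ht⟩ := hq u
  have hdiff : q (.inl u) - p (.inl u) ≤ p (.inr t) - q (.inr t) := by linarith [hp u t]
  exact (max_le_max_right 0 hdiff).trans (le_ciSup hbdd t)

end DirectedMetric

open DirectedMetric in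
theorem stmt_5_general {S : Type*} [Fintype S]
    (μ : S → S → ℝ)
    (p q : S ⊕ S → ℝ)
    (hp : ∀ s t : S, μ s t ≤ p (Sum.inl s) + p (Sum.inr t))
    (hq : ∀ s t : S, μ s t ≤ q (Sum.inl s) + q (Sum.inr t))
    (hpmin : ¬ ∃ p' : S ⊕ S → ℝ,
      (∀ s t : S, μ s t ≤ p' (Sum.inl s) + p' (Sum.inr t)) ∧ p' ≤ p ∧ p' ≠ p)
    (hqmin : ¬ ∃ q' : S ⊕ S → ℝ,
      (∀ s t : S, μ s t ≤ q' (Sum.inl s) + q' (Sum.inr t)) ∧ q' ≤ q ∧ q' ≠ q) :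
    (⨆ u : S, max (q (Sum.inl u) - p (Sum.inl u)) 0)
      = (⨆ v : S, max (p (Sum.inr v) - q (Sum.inr v)) 0) := by
  have hpQ := minimal_dominates_of_not_exists hp hpmin
  have hqQ := minimal_dominates_of_not_exists hq hqmin
  refine le_antisymm (iSup_max_sub_inl_le_of_tight hp (exists_tight_inl_of_minimal hqQ)) ?_
  simpa using iSup_max_sub_inl_le_of_tight (μ := flip μ) (p := q ∘ Sum.swap)
    (q := p ∘ Sum.swap)
    hqQ.prop.swap (exists_tight_inl_of_minimal (minimal_dominates_flip_swap hpQ))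

/-- for minimal points `p, q` of `P_μ` one has
`D_∞^+(p^c,q^c) = D_∞^+(q^r,p^r)`. -/
theorem stmt_5 {S : Type*} [Fintype S] [Nonempty S]
    (μ : S → S → ℝ) (hμ0 : ∀ s t, 0 ≤ μ s t) (hμdiag : ∀ s, μ s s = 0)
    (hμtri : ∀ s t u, μ s u ≤ μ s t + μ t u)
    (p q : S ⊕ S → ℝ)
    (hp : ∀ s t : S, μ s t ≤ p (Sum.inl s) + p (Sum.inr t))
    (hq : ∀ s t : S, μ s t ≤ q (Sum.inl s) + q (Sum.inr t))
    (hpmin : ¬ ∃ p' : S ⊕ S → ℝ,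
      (∀ s t : S, μ s t ≤ p' (Sum.inl s) + p' (Sum.inr t)) ∧ p' ≤ p ∧ p' ≠ p)
    (hqmin : ¬ ∃ q' : S ⊕ S → ℝ,
      (∀ s t : S, μ s t ≤ q' (Sum.inl s) + q' (Sum.inr t)) ∧ q' ≤ q ∧ q' ≠ q) :
    (⨆ u : S, max (q (Sum.inl u) - p (Sum.inl u)) 0)
      = (⨆ v : S, max (p (Sum.inr v) - q (Sum.inr v)) 0) :=
  stmt_5_general μ p q hp hq hpmin hqmin
end

section
/- Let μ be a directed distance on a finite set S. A nonnegative point p ∈ P_μ belongs to the directed tight span T_μ (the set of minimal elements of the nonnegative part of P_μ) if and only if the bipartite graph K(p) on S^c ∪ S^r with edges { s^c t^r : p(s^c) + p(t^r) = μ(s,t) } has no isolated node u with p(u) > 0. -/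
/-!
If a node `u` with `p u > 0` is isolated in `K(p)`, every constraint through `u` is strict, and
since there are finitely many of them `p u` can be lowered by a small `ε > 0` without leaving
`P_μ^+`. Conversely, if `q ≤ p` lies in `P_μ^+` and `q u < p u`, then `p u > 0`, and an edge
`s^c t^r` of `K(p)` at `u` gives `μ s t ≤ q s^c + q t^r < p s^c + p t^r = μ s t`.
-/

open Filter Topology Sum

namespace DirectedTightSpan

variable {α β : Type*} (μ : α → β → ℝ) (p : α ⊕ β → ℝ)

/-- `p ∈ P_μ`, with `α` and `β` playing the roles of `S^c` and `S^r`. -/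
def Dominates : Prop := ∀ a b, μ a b ≤ p (inl a) + p (inr b)

/-- `a^c b^r` is an edge of the graph `K(p)`. -/
def IsTight (a : α) (b : β) : Prop := p (inl a) + p (inr b) = μ a b

def IsIsolated (u : α ⊕ β) : Prop := ∀ a b, (inl a = u ∨ inr b = u) → ¬ IsTight μ p a b

variable {μ p}

theorem isIsolated_inl_iff {a : α} : IsIsolated μ p (inl a) ↔ ∀ b, ¬ IsTight μ p a b := by
  simp [IsIsolated, forall_comm (α := β)]

theorem isIsolated_inr_iff {b : β} : IsIsolated μ p (inr b) ↔ ∀ a, ¬ IsTight μ p a b := by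
  simp [IsIsolated]

theorem exists_pos_le_of_forall_pos {ι : Type*} [Finite ι] {c : ℝ} (hc : 0 < c) {f : ι → ℝ}
    (hf : ∀ i, 0 < f i) : ∃ ε, 0 < ε ∧ ε ≤ c ∧ ∀ i, ε ≤ f i := by
  have hsmall {x : ℝ} (hx : 0 < x) : ∀ᶠ ε in 𝓝[>] (0 : ℝ), ε ≤ x :=
    mem_of_superset (Ioo_mem_nhdsGT hx) fun _ h => h.2.le
  have hpos : ∀ᶠ ε in 𝓝[>] (0 : ℝ), 0 < ε := eventually_mem_nhdsWithin
  exact (hpos.and ((hsmall hc).and (eventually_all.2 fun i => hsmall (hf i)))).exists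

theorem exists_lt_of_isIsolated [Finite α] [Finite β] (hp0 : 0 ≤ p) (hp : Dominates μ p)
    {u : α ⊕ β} (hu : 0 < p u) (hiso : IsIsolated μ p u) :
    ∃ q, 0 ≤ q ∧ Dominates μ q ∧ q < p := by
  classical
  obtain ⟨ε, hε, hεu, hεslack⟩ := exists_pos_le_of_forall_pos hu
    (f := fun ab : {ab : α × β // inl ab.1 = u ∨ inr ab.2 = u} =>
      p (inl ab.1.1) + p (inr ab.1.2) - μ ab.1.1 ab.1.2)
    fun ⟨⟨a, b⟩, hab⟩ => sub_pos.2 ((hp a b).lt_of_ne' (hiso a b hab))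
  refine ⟨p - Pi.single u ε, fun v => ?_, fun a b => ?_, sub_lt_self p (Pi.single_pos.2 hε)⟩
  · by_cases hv : v = u
    · subst hv; simpa using hεu
    · simpa [hv] using hp0 v
  · have hsingle : (Pi.single u ε : α ⊕ β → ℝ) (inl a) + (Pi.single u ε : α ⊕ β → ℝ) (inr b)
        ≤ p (inl a) + p (inr b) - μ a b := by
      by_cases ha : inl a = u
      · subst ha; simpa using hεslack ⟨(a, b), .inl rfl⟩
      by_cases hb : inr b = u
      · subst hb; simpa using hεslack ⟨(a, b), .inr rfl⟩
      simpa [Ne.symm ha, Ne.symm hb] using hp a b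
    simp only [Pi.sub_apply]
    linarith

theorem eq_of_le_of_forall_not_isIsolated {q : α ⊕ β → ℝ} (hq0 : 0 ≤ q) (hq : Dominates μ q)
    (hqp : q ≤ p) (hp : ∀ u, 0 < p u → ¬ IsIsolated μ p u) : q = p := by
  by_contra hne
  obtain ⟨u, hu⟩ : ∃ u, q u < p u := Pi.lt_def.1 (lt_of_le_of_ne hqp hne) |>.2
  obtain ⟨a, b, hab, htight⟩ : ∃ a b, (inl a = u ∨ inr b = u) ∧ IsTight μ p a b := by
    simpa [IsIsolated] using hp u ((hq0 u).trans_lt hu)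
  have := hq a b
  have := hqp (inl a)
  have := hqp (inr b)
  unfold IsTight at htight
  rcases hab with rfl | rfl <;> linarith

theorem not_exists_lt_iff [Finite α] [Finite β] (hp0 : 0 ≤ p) (hp : Dominates μ p) :
    (¬ ∃ q, 0 ≤ q ∧ Dominates μ q ∧ q < p) ↔ ∀ u, 0 < p u → ¬ IsIsolated μ p u :=
  ⟨fun hmin _ hu hiso => hmin (exists_lt_of_isIsolated hp0 hp hu hiso),
    fun h ⟨_, hq0, hq, hqp⟩ => hqp.ne (eq_of_le_of_forall_not_isIsolated hq0 hq hqp.le h)⟩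

end DirectedTightSpan

theorem stmt_6_general {S : Type*} [Fintype S]
    (μ : S → S → ℝ)
    (p : S ⊕ S → ℝ) (hp0 : ∀ u, 0 ≤ p u)
    (hp : ∀ s t : S, μ s t ≤ p (Sum.inl s) + p (Sum.inr t)) :
    (¬ ∃ q : S ⊕ S → ℝ, (∀ u, 0 ≤ q u) ∧
        (∀ s t : S, μ s t ≤ q (Sum.inl s) + q (Sum.inr t)) ∧ q ≤ p ∧ q ≠ p)
      ↔ ((∀ s : S, 0 < p (Sum.inl s) →
            ∃ t : S, p (Sum.inl s) + p (Sum.inr t) = μ s t) ∧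
         (∀ t : S, 0 < p (Sum.inr t) →
            ∃ s : S, p (Sum.inl s) + p (Sum.inr t) = μ s t)) := by
  have hmin := DirectedTightSpan.not_exists_lt_iff (μ := μ) hp0 hp
  simp only [Sum.forall, DirectedTightSpan.isIsolated_inl_iff,
    DirectedTightSpan.isIsolated_inr_iff, DirectedTightSpan.IsTight, not_forall, not_not] at hmin
  simpa only [DirectedTightSpan.Dominates, Pi.le_def, Pi.zero_apply, lt_iff_le_and_ne,
    and_assoc] using hmin

/-- a nonnegative point `p ∈ P_μ^+` belongs to the directed tight
span `T_μ` (minimal elements of `P_μ^+`) iff the graph `K(p)` has no isolated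
node `u` with `p(u) > 0`. -/
theorem stmt_6 {S : Type*} [Fintype S]
    (μ : S → S → ℝ) (hμ0 : ∀ s t, 0 ≤ μ s t) (hμdiag : ∀ s, μ s s = 0)
    (p : S ⊕ S → ℝ) (hp0 : ∀ u, 0 ≤ p u)
    (hp : ∀ s t : S, μ s t ≤ p (Sum.inl s) + p (Sum.inr t)) :
    (¬ ∃ q : S ⊕ S → ℝ, (∀ u, 0 ≤ q u) ∧
        (∀ s t : S, μ s t ≤ q (Sum.inl s) + q (Sum.inr t)) ∧ q ≤ p ∧ q ≠ p)
      ↔ ((∀ s : S, 0 < p (Sum.inl s) →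
            ∃ t : S, p (Sum.inl s) + p (Sum.inr t) = μ s t) ∧
         (∀ t : S, 0 < p (Sum.inr t) →
            ∃ s : S, p (Sum.inl s) + p (Sum.inr t) = μ s t)) :=
  stmt_6_general μ p hp0 hp
end

section
/- Let μ be a directed distance on a finite set S. A point p ∈ P_μ belongs to Q_μ (the set of minimal elements of P_μ) if and only if the bipartite graph K(p) on S^c ∪ S^r with edge set { s^c t^r : p(s^c) + p(t^r) = μ(s,t) } has no isolated node. -/
/-!
If a feasible `q` lies below `p` and differs from it at a node `x`, then every constraint through
`x` satisfies `μ ≤ q-sum < p-sum`, so `x` is isolated in `K(p)`. Conversely, an isolated node can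
be lowered by the least slack of the (finitely many) constraints through it without leaving `P_μ`.
-/

open Sum

theorem exists_pos_forall_le_of_finite {ι R : Type*} [Finite ι] [AddCommGroup R] [LinearOrder R]
    [IsOrderedAddMonoid R] [Nontrivial R] {f : ι → R} (hf : ∀ i, 0 < f i) :
    ∃ ε > 0, ∀ i, ε ≤ f i := by
  cases isEmpty_or_nonempty ι
  · obtain ⟨ε, hε⟩ := exists_zero_lt (α := R)
    exact ⟨ε, hε, isEmptyElim⟩
  · obtain ⟨i, hi⟩ := Finite.exists_min f
    exact ⟨f i, hf i, hi⟩

section Potentials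

variable {α β R : Type*}

/-- Membership in the polyhedron `P_μ`; the column copy `s^c` is `inl s`, the row copy `t^r` is
`inr t`. -/
def IsFeasible [Add R] [LE R] (μ : α → β → R) (p : α ⊕ β → R) : Prop :=
  ∀ s t, μ s t ≤ p (inl s) + p (inr t)

/-- The node `x` has no edge in the tight graph `K(p)`. -/
def IsIsolated [Add R] (μ : α → β → R) (p : α ⊕ β → R) (x : α ⊕ β) : Prop :=
  ∀ s t, x = inl s ∨ x = inr t → p (inl s) + p (inr t) ≠ μ s t

theorem isIsolated_inl_iff [Add R] {μ : α → β → R} {p : α ⊕ β → R} {s : α} :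
    IsIsolated μ p (inl s) ↔ ∀ t, p (inl s) + p (inr t) ≠ μ s t := by
  simp [IsIsolated, forall_comm (α := α), eq_comm]

theorem isIsolated_inr_iff [Add R] {μ : α → β → R} {p : α ⊕ β → R} {t : β} :
    IsIsolated μ p (inr t) ↔ ∀ s, p (inl s) + p (inr t) ≠ μ s t := by
  simp [IsIsolated, eq_comm]

variable [Field R] [LinearOrder R] [IsStrictOrderedRing R] {μ : α → β → R} {p q : α ⊕ β → R}

theorem IsFeasible.isIsolated_of_lt (hq : IsFeasible μ q) {x : α ⊕ β} (hle : q ≤ p)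
    (hx : q x < p x) : IsIsolated μ p x := by
  rintro s t (rfl | rfl) htight
  · linarith [hq s t, hle (inr t)]
  · linarith [hq s t, hle (inl s)]

theorem IsFeasible.exists_lt_of_isIsolated [Finite α] [Finite β] (hp : IsFeasible μ p)
    {x : α ⊕ β} (hx : IsIsolated μ p x) : ∃ q, IsFeasible μ q ∧ q < p := by
  classical
  let slack (st : {st : α × β // x = inl st.1 ∨ x = inr st.2}) : R :=
    p (inl st.1.1) + p (inr st.1.2) - μ st.1.1 st.1.2
  obtain ⟨ε, hε, hεle⟩ := exists_pos_forall_le_of_finite (f := slack) fun ⟨⟨s, t⟩, hst⟩ ↦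
    sub_pos.2 <| (hp s t).lt_of_ne' (hx s t hst)
  refine ⟨p - Pi.single x ε, fun s t ↦ ?_, sub_lt_self _ (Pi.single_pos.2 hε)⟩
  by_cases hst : x = inl s ∨ x = inr t
  · have := hεle ⟨(s, t), hst⟩
    rcases hst with rfl | rfl <;>
      simp only [slack, Pi.sub_apply, Pi.single_eq_same, ne_eq, reduceCtorEq, not_false_eq_true,
        Pi.single_eq_of_ne, sub_zero] at this ⊢ <;>
      linarith
  · push Not at hst
    simpa [Pi.single_apply, Ne.symm hst.1, Ne.symm hst.2] using hp s t

theorem minimal_isFeasible_iff [Finite α] [Finite β] (hp : IsFeasible μ p) :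
    Minimal (IsFeasible μ) p ↔ ∀ x, ¬ IsIsolated μ p x := by
  rw [minimal_iff_forall_lt]
  constructor
  · rintro ⟨-, hmin⟩ x hx
    obtain ⟨q, hq, hlt⟩ := hp.exists_lt_of_isIsolated hx
    exact hmin hlt hq
  · refine fun h ↦ ⟨hp, fun q hlt hq ↦ ?_⟩
    obtain ⟨x, hx⟩ := Pi.lt_def.1 hlt |>.2
    exact h x (hq.isIsolated_of_lt hlt.le hx)

end Potentials

theorem stmt_7_general {S : Type*} [Fintype S]
    (μ : S → S → ℝ)
    (p : S ⊕ S → ℝ)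
    (hp : ∀ s t : S, μ s t ≤ p (Sum.inl s) + p (Sum.inr t)) :
    (¬ ∃ q : S ⊕ S → ℝ,
        (∀ s t : S, μ s t ≤ q (Sum.inl s) + q (Sum.inr t)) ∧ q ≤ p ∧ q ≠ p)
      ↔ ((∀ s : S, ∃ t : S, p (Sum.inl s) + p (Sum.inr t) = μ s t) ∧
         (∀ t : S, ∃ s : S, p (Sum.inl s) + p (Sum.inr t) = μ s t)) := by
  have hmin : Minimal (IsFeasible μ) p ↔ ¬ ∃ q, IsFeasible μ q ∧ q ≤ p ∧ q ≠ p := by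
    simp only [minimal_iff_forall_lt, lt_iff_le_and_ne, not_exists, not_and]
    exact ⟨fun h q hq hle hne ↦ h.2 ⟨hle, hne⟩ hq, fun h ↦ ⟨hp, fun q ⟨hle, hne⟩ hq ↦ h q hq hle hne⟩⟩
  refine hmin.symm.trans ?_
  rw [minimal_isFeasible_iff hp, Sum.forall]
  simp only [isIsolated_inl_iff, isIsolated_inr_iff, not_forall, not_not]

/-- a point `p ∈ P_μ` belongs to `Q_μ` (minimal elements of `P_μ`)
iff the bipartite graph `K(p)` has no isolated node. -/
theorem stmt_7 {S : Type*} [Fintype S]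
    (μ : S → S → ℝ) (hμ0 : ∀ s t, 0 ≤ μ s t) (hμdiag : ∀ s, μ s s = 0)
    (p : S ⊕ S → ℝ)
    (hp : ∀ s t : S, μ s t ≤ p (Sum.inl s) + p (Sum.inr t)) :
    (¬ ∃ q : S ⊕ S → ℝ,
        (∀ s t : S, μ s t ≤ q (Sum.inl s) + q (Sum.inr t)) ∧ q ≤ p ∧ q ≠ p)
      ↔ ((∀ s : S, ∃ t : S, p (Sum.inl s) + p (Sum.inr t) = μ s t) ∧
         (∀ t : S, ∃ s : S, p (Sum.inl s) + p (Sum.inr t) = μ s t)) :=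
  stmt_7_general μ p hp
end

section
/- Let μ be a directed distance on a finite set S that can be written as μ = ∑_{(A,B) ∈ 𝒜} α(A,B) δ_{A,B} for a laminar family 𝒜 of partial cuts on S and positive weights α. Then μ has an oriented-tree realization: there exist an oriented tree Γ, a nonnegative edge length α' on EΓ, and a family {F_s}_{s∈S} of subtrees of Γ such that μ(s,t) = D_{Γ,α'}(F_s,F_t) := min_{u ∈ VF_s, v ∈ VF_t} D_{Γ,α'}(u,v) for all s,t. -/
/-!
Every cut `(A, B)` of the family becomes one edge of the tree, and a vertex is a consistent
orientation: a choice, for every cut, of the side on which the vertex lies, such that no two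
choices are ruled out by laminarity (`Conflict`). Two orientations are adjacent when they differ
on exactly one cut. Between two consistent orientations one can always flip a differing cut of
minimal rank and stay consistent, so the graph is connected; by laminarity, two edges flipping
the same cut coincide, so every edge is a bridge and the graph is a tree. A path crosses every cut
at most once, hence its forward length is the total weight of the cuts it leaves through their
`A`-side and enters through their `B`-side. The subtree `F s` consists of the orientations that
put `s` on its own side of every cut containing it: the distance from `F s` to `F t` is at least
`μ s t`, and it is attained by pinning an orientation to `s`, then to `t`, then to `s` again.
-/

def LaminarPair {S : Type*} (P Q : Set S × Set S) : Prop :=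
  (P.1 ⊆ Q.1 ∧ Q.2 ⊆ P.2) ∨ (P.1 ⊆ Q.2 ∧ Q.1 ⊆ P.2) ∨
  (Q.1 ⊆ P.1 ∧ P.2 ⊆ Q.2) ∨ (Q.2 ⊆ P.1 ∧ P.2 ⊆ Q.1)

theorem SimpleGraph.Walk.exists_dart_ne {V β : Type*} {G : SimpleGraph V} {x y : V}
    (p : G.Walk x y) {f : V → β} (h : f x ≠ f y) : ∃ d ∈ p.darts, f d.fst ≠ f d.snd := by
  obtain ⟨d, hd, h₁, h₂⟩ := p.exists_boundary_dart {z | f z = f x} rfl (Ne.symm h)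
  exact ⟨d, hd, fun e => h₂ (e.symm.trans h₁)⟩

theorem hammingDist_update_lt {ι : Type*} {β : ι → Type*} [Fintype ι] [DecidableEq ι]
    [∀ i, DecidableEq (β i)] {x y : ∀ i, β i} {i : ι} (h : x i ≠ y i) :
    hammingDist (Function.update x i (y i)) y < hammingDist x y := by
  refine Finset.card_lt_card ⟨fun j => ?_, fun hsub => ?_⟩
  · rcases eq_or_ne j i with rfl | hj <;> simp_all
  · simpa using hsub (Finset.mem_filter.2 ⟨Finset.mem_univ i, h⟩)

namespace LaminarCutRealization

open Function Finset SimpleGraph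

variable {S ι V : Type*}

def orient (P : Set S × Set S) : Bool → Set S × Set S
  | true => P
  | false => P.swap

@[simp] lemma orient_true (P : Set S × Set S) : orient P true = P := rfl

@[simp] lemma orient_false (P : Set S × Set S) : orient P false = P.swap := rfl

@[simp] lemma orient_not (P : Set S × Set S) (b : Bool) : orient P (!b) = (orient P b).swap := by
  cases b <;> rfl

lemma disjoint_orient {P : Set S × Set S} (h : Disjoint P.1 P.2) (b : Bool) :
    Disjoint (orient P b).1 (orient P b).2 := by
  cases b
  exacts [h.symm, h]

lemma orient_snd_subset (P : Set S × Set S) (b : Bool) : (orient P b).2 ⊆ P.1 ∪ P.2 := by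
  cases b <;> simp

def Opposed (X Y : Set S × Set S) : Prop := X.1 ⊆ Y.2 ∧ Y.1 ⊆ X.2

lemma Opposed.symm {X Y : Set S × Set S} (h : Opposed X Y) : Opposed Y X := ⟨h.2, h.1⟩

lemma Opposed.trans_swap {X Y Z : Set S × Set S} (h : Opposed X Y) (h' : Opposed X.swap Z) :
    Opposed Y Z :=
  ⟨h.2.trans h'.1, h'.2.trans h.1⟩

/-- No vertex of the tree lies on side `a` of `P` and on side `b` of `Q`. If `Q = P.swap`, the
edges of `P` and `Q` are in series and only the region `a = b = true` is empty: this is the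
tie-break in the second conjunct. -/
def Conflict (P : Set S × Set S) (a : Bool) (Q : Set S × Set S) (b : Bool) : Prop :=
  Opposed (orient P a) (orient Q b) ∧ (orient P a = (orient Q b).swap → a = true ∧ b = true)

lemma Conflict.symm {P Q : Set S × Set S} {a b : Bool} (h : Conflict P a Q b) :
    Conflict Q b P a :=
  ⟨h.1.symm, fun he => (h.2 (by rw [he, Prod.swap_swap])).symm⟩

lemma not_conflict_self {P : Set S × Set S} (hd : Disjoint P.1 P.2)
    (hne : P.1.Nonempty ∧ P.2.Nonempty) (a : Bool) : ¬ Conflict P a P a := by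
  rintro ⟨⟨h, -⟩, -⟩
  obtain ⟨x, hx⟩ : (orient P a).1.Nonempty := by cases a <;> simp [hne]
  exact Set.disjoint_left.1 (disjoint_orient hd a) hx (h hx)

lemma Conflict.of_both_sides {P Q R : Set S × Set S} {a b : Bool} (h₁ : Conflict P true Q a)
    (h₂ : Conflict P false R b) : Conflict Q a R b := by
  refine ⟨h₁.1.trans_swap h₂.1, fun he => ?_⟩
  obtain ⟨⟨h₁₁, h₁₂⟩, -⟩ := h₁
  obtain ⟨⟨h₂₁, h₂₂⟩, h₂'⟩ := h₂
  rw [he] at h₁₁ h₁₂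
  simp only [orient_true, orient_false, Prod.fst_swap, Prod.snd_swap] at *
  simpa using h₂' (Prod.ext (h₂₁.antisymm h₁₂) (h₁₁.antisymm h₂₂))

lemma _root_.LaminarPair.exists_opposed {P Q : Set S × Set S} (h : LaminarPair P Q) :
    ∃ a b, Opposed (orient P a) (orient Q b) := by
  rcases h with h | h | h | h
  · exact ⟨true, false, h.1, h.2⟩
  · exact ⟨true, true, h.1, h.2⟩
  · exact ⟨false, true, h.2, h.1⟩
  · exact ⟨false, false, h.2, h.1⟩

lemma _root_.LaminarPair.exists_conflict {P Q : Set S × Set S} (h : LaminarPair P Q)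
    (hPQ : P ≠ Q) : ∃ a b, Conflict P a Q b := by
  obtain ⟨a, b, hab⟩ := h.exists_opposed
  by_cases htie : orient P a = (orient Q b).swap → a = true ∧ b = true
  · exact ⟨a, b, hab, htie⟩
  push Not at htie
  refine ⟨true, true, ?_, fun _ => ⟨rfl, rfl⟩⟩
  cases a <;> cases b <;> simp_all [Opposed]
  rw [← htie]
  exact ⟨subset_rfl, subset_rfl⟩

def Consistent (E : ι → Set S × Set S) (σ : ι → Bool) : Prop :=
  Pairwise fun i j => ¬ Conflict (E i) (σ i) (E j) (σ j)

lemma Consistent.update_of_not_conflict [DecidableEq ι] {E : ι → Set S × Set S}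
    {σ : ι → Bool} {i : ι} {b : Bool} (hσ : Consistent E σ)
    (h : ∀ k, k ≠ i → ¬ Conflict (E i) b (E k) (σ k)) : Consistent E (update σ i b) := by
  intro j k hjk
  rcases eq_or_ne j i with rfl | hj
  · rw [update_self, update_of_ne hjk.symm]
    exact h k hjk.symm
  rcases eq_or_ne k i with rfl | hk
  · rw [update_self, update_of_ne hj]
    exact fun hc => h j hj hc.symm
  rw [update_of_ne hj, update_of_ne hk]
  exact hσ hjk

theorem exists_consistent [Fintype ι] [DecidableEq ι] {E : ι → Set S × Set S}
    (hd : ∀ i, Disjoint (E i).1 (E i).2) (hne : ∀ i, (E i).1.Nonempty ∧ (E i).2.Nonempty) :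
    ∃ σ, Consistent E σ := by
  suffices ∀ T : Finset ι, ∃ σ : ι → Bool,
      (T : Set ι).Pairwise fun i j => ¬ Conflict (E i) (σ i) (E j) (σ j) by
    obtain ⟨σ, hσ⟩ := this univ
    exact ⟨σ, fun i j hij => hσ (mem_univ i) (mem_univ j) hij⟩
  intro T
  induction T using Finset.induction_on with
  | empty => exact ⟨fun _ => true, by simp⟩
  | insert k T hk ih =>
    obtain ⟨σ, hσ⟩ := ih
    obtain ⟨b, hb⟩ : ∃ b, ∀ j ∈ T, ¬ Conflict (E k) b (E j) (σ j) := by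
      by_contra! h
      obtain ⟨j₁, hj₁, h₁⟩ := h true
      obtain ⟨j₂, hj₂, h₂⟩ := h false
      obtain rfl | hj := eq_or_ne j₁ j₂
      · exact not_conflict_self (hd j₁) (hne j₁) _ (h₁.of_both_sides h₂)
      · exact hσ hj₁ hj₂ hj (h₁.of_both_sides h₂)
    refine ⟨update σ k b, ?_⟩
    rw [coe_insert, Set.pairwise_insert]
    refine ⟨fun i hi j hj hij => ?_, fun j hj hkj => ?_⟩
    · dsimp only
      rw [update_of_ne (ne_of_mem_of_not_mem hi hk), update_of_ne (ne_of_mem_of_not_mem hj hk)]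
      exact hσ hi hj hij
    · rw [update_self, update_of_ne hkj.symm]
      exact ⟨hb j hj, fun hc => hb j hj hc.symm⟩

/-- Flipping a coordinate of minimal rank keeps an orientation consistent; the `Bool` component
breaks the tie between `P` and `P.swap` in favour of the side `true`. -/
def rank (P : Set S × Set S) (a : Bool) : (Set S × Set S) ×ₗ Bool :=
  toLex (((orient P a).1, (orient P a).2ᶜ), !a)

lemma Conflict.rank_lt {P Q : Set S × Set S} {a b : Bool} (h : Conflict P (!a) Q b) :
    rank Q b < rank P a := by
  obtain ⟨⟨h₁, h₂⟩, htie⟩ := h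
  simp only [orient_not, Prod.fst_swap, Prod.snd_swap] at h₁ h₂ htie
  have hle : ((orient Q b).1, (orient Q b).2ᶜ) ≤ ((orient P a).1, (orient P a).2ᶜ) :=
    ⟨h₂, Set.compl_subset_compl.2 h₁⟩
  rw [rank, rank, Prod.Lex.toLex_lt_toLex]
  rcases hle.lt_or_eq with hlt | heq
  · exact .inl hlt
  · simp only [Prod.mk.injEq, compl_inj_iff] at heq
    obtain ⟨ha, rfl⟩ := htie (by rw [Prod.ext heq.1 heq.2])
    exact .inr ⟨Prod.ext heq.1 (by rw [heq.2]), by simp [ha]⟩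

theorem Consistent.exists_flip [Fintype ι] [DecidableEq ι] {E : ι → Set S × Set S}
    {σ τ : ι → Bool} (hσ : Consistent E σ) (hτ : Consistent E τ) (hne : σ ≠ τ) :
    ∃ i, σ i ≠ τ i ∧ Consistent E (update σ i (τ i)) := by
  obtain ⟨i₀, hi₀⟩ := Function.ne_iff.1 hne
  obtain ⟨i, hiΔ, hmin⟩ := (univ.filter fun k => σ k ≠ τ k).exists_minimalFor
    (fun k => rank (E k) (σ k)) ⟨i₀, by simpa using hi₀⟩
  have hi : σ i ≠ τ i := (mem_filter.1 hiΔ).2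
  refine ⟨i, hi, hσ.update_of_not_conflict fun k hki hc => ?_⟩
  by_cases hk : σ k = τ k
  · exact hτ hki.symm (hk ▸ hc)
  · rw [Bool.eq_not.2 hi.symm] at hc
    exact hc.rank_lt.not_ge (hmin (by simpa using hk) hc.rank_lt.le)

def FlipAt {β : Type*} (x y : ι → β) (i : ι) : Prop := x i ≠ y i ∧ ∀ j, j ≠ i → x j = y j

lemma FlipAt.symm {β : Type*} {x y : ι → β} {i : ι} (h : FlipAt x y i) : FlipAt y x i :=
  ⟨h.1.symm, fun j hj => (h.2 j hj).symm⟩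

lemma FlipAt.eq_of_ne {β : Type*} {x y : ι → β} {i j : ι} (h : FlipAt x y i) (hj : x j ≠ y j) :
    j = i :=
  by_contra fun hji => hj (h.2 j hji)

lemma FlipAt.apply_eq_not {x y : ι → Bool} {i : ι} (h : FlipAt x y i) : y i = !x i :=
  Bool.eq_not.2 h.1.symm

lemma FlipAt.eq_and_eq_or_eq_and_eq {x y z w : ι → Bool} {i : ι} (hxy : FlipAt x y i)
    (hzw : FlipAt z w i) (hxz : ∀ j, j ≠ i → x j = z j) :
    x = z ∧ y = w ∨ x = w ∧ y = z := by
  have hy := hxy.apply_eq_not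
  have hw := hzw.apply_eq_not
  have off : ∀ j, j ≠ i → y j = x j ∧ w j = z j := fun j hj =>
    ⟨(hxy.2 j hj).symm, (hzw.2 j hj).symm⟩
  by_cases hi : x i = z i
  · refine .inl ⟨funext fun j => ?_, funext fun j => ?_⟩ <;>
      rcases eq_or_ne j i with rfl | hj <;> simp_all
  · have hi : x i = !z i := Bool.eq_not.2 hi
    refine .inr ⟨funext fun j => ?_, funext fun j => ?_⟩ <;>
      rcases eq_or_ne j i with rfl | hj <;> simp_all

theorem Consistent.eq_of_flipAt {E : ι → Set S × Set S} (hinj : Injective E)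
    (hl : ∀ i j, LaminarPair (E i) (E j)) {σ σ' τ τ' : ι → Bool} (hσ : Consistent E σ)
    (hσ' : Consistent E σ') (hτ : Consistent E τ) (hτ' : Consistent E τ') {i : ι}
    (h : FlipAt σ σ' i) (h' : FlipAt τ τ' i) {j : ι} (hj : j ≠ i) : σ j = τ j := by
  by_contra hστ
  obtain ⟨a, b, hab⟩ := (hl i j).exists_conflict (hinj.ne hj.symm)
  have key : ∀ ρ, Consistent E ρ → ρ i = a → ρ j ≠ b := fun ρ hρ hi hj' =>
    hρ hj.symm (hi ▸ hj' ▸ hab)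
  have h₁ := key σ hσ
  have h₂ := key σ' hσ'
  have h₃ := key τ hτ
  have h₄ := key τ' hτ'
  rw [← h.2 j hj] at h₂
  rw [← h'.2 j hj] at h₄
  -- as `σ j ≠ τ j`, the four orientations realise all four sign patterns at `(i, j)`
  exact (by decide : ∀ p p' q q' x y a b : Bool, p ≠ p' → q ≠ q' → x ≠ y →
    (p = a → x ≠ b) → (p' = a → x ≠ b) → (q = a → y ≠ b) → (q' = a → y ≠ b) → False)
    _ _ _ _ _ _ a b h.1 h'.1 hστ h₁ h₂ h₃ h₄

open Classical in
noncomputable def pin (E : ι → Set S × Set S) (s : S) (σ : ι → Bool) (i : ι) : Bool :=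
  if s ∈ (E i).1 then true else if s ∈ (E i).2 then false else σ i

def Respects (E : ι → Set S × Set S) (s : S) (σ : ι → Bool) : Prop :=
  ∀ i, (s ∈ (E i).1 → σ i = true) ∧ (s ∈ (E i).2 → σ i = false)

section Pin

variable {E : ι → Set S × Set S}

lemma pin_of_not_mem {s : S} {i : ι} (hs : s ∉ (E i).1 ∪ (E i).2) (σ : ι → Bool) :
    pin E s σ i = σ i := by
  simp_all [pin]

lemma mem_orient_pin {s : S} {i : ι} (hs : s ∈ (E i).1 ∪ (E i).2) (σ : ι → Bool) :
    s ∈ (orient (E i) (pin E s σ i)).1 := by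
  by_cases h : s ∈ (E i).1 <;> simp_all [pin]

lemma respects_pin (hd : ∀ i, Disjoint (E i).1 (E i).2) (s : S) (σ : ι → Bool) :
    Respects E s (pin E s σ) := fun i =>
  ⟨fun h => by simp [pin, h], fun h => by simp [pin, h, Set.disjoint_right.1 (hd i) h]⟩

lemma Respects.of_forall_eq_or_eq {s : S} {x y z : ι → Bool} (hx : Respects E s x)
    (hy : Respects E s y) (hz : ∀ i, z i = x i ∨ z i = y i) : Respects E s z := by
  intro i
  rcases hz i with h | h <;> rw [h]
  exacts [hx i, hy i]

theorem Consistent.pin (hd : ∀ i, Disjoint (E i).1 (E i).2) {σ : ι → Bool}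
    (hσ : Consistent E σ) (s : S) : Consistent E (pin E s σ) := by
  intro i j hij hc
  obtain ⟨⟨h₁, h₂⟩, -⟩ := id hc
  by_cases hi : s ∈ (E i).1 ∪ (E i).2
  · have hsj := h₁ (mem_orient_pin hi σ)
    exact Set.disjoint_left.1 (disjoint_orient (hd j) _)
      (mem_orient_pin (orient_snd_subset _ _ hsj) σ) hsj
  by_cases hj : s ∈ (E j).1 ∪ (E j).2
  · exact hi (orient_snd_subset _ _ (h₂ (mem_orient_pin hj σ)))
  · exact hσ hij (by rwa [pin_of_not_mem hi, pin_of_not_mem hj] at hc)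

end Pin

variable (v : V → ι → Bool)

def flipGraph : SimpleGraph V where
  Adj a b := ∃ i, FlipAt (v a) (v b) i
  symm := ⟨fun _ _ ⟨i, h⟩ => ⟨i, h.symm⟩⟩
  loopless := ⟨fun _ ⟨_, h⟩ => h.1 rfl⟩

variable {v}

lemma flipAt_of_dart (d : (flipGraph v).Dart) {i : ι} (h : v d.fst i ≠ v d.snd i) :
    FlipAt (v d.fst) (v d.snd) i := by
  obtain ⟨k, hk⟩ := d.adj
  obtain rfl := hk.eq_of_ne h
  exact hk

lemma flipGraph_edge_eq (hv : Injective v)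
    (hagree : ∀ a b c d i, FlipAt (v a) (v b) i → FlipAt (v c) (v d) i →
      ∀ j, j ≠ i → v a j = v c j)
    {a b c d : V} {i : ι} (hab : FlipAt (v a) (v b) i) (hcd : FlipAt (v c) (v d) i) :
    s(a, b) = s(c, d) := by
  rcases hab.eq_and_eq_or_eq_and_eq hcd (hagree a b c d i hab hcd) with ⟨h₁, h₂⟩ | ⟨h₁, h₂⟩
  · rw [hv h₁, hv h₂]
  · rw [hv h₁, hv h₂, Sym2.eq_swap]

theorem isAcyclic_flipGraph (hv : Injective v)
    (hagree : ∀ a b c d i, FlipAt (v a) (v b) i → FlipAt (v c) (v d) i →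
      ∀ j, j ≠ i → v a j = v c j) :
    (flipGraph v).IsAcyclic := by
  refine isAcyclic_iff_forall_adj_isBridge.2 fun a b ⟨i, hab⟩ =>
    isBridge_iff_forall_walk_mem_edges.2 fun p => ?_
  obtain ⟨d, hd, hdi⟩ := p.exists_dart_ne (f := fun x => v x i) hab.1
  rw [flipGraph_edge_eq hv hagree hab (flipAt_of_dart d hdi)]
  exact List.mem_map_of_mem hd

theorem exists_walk_flipGraph [Fintype ι] [DecidableEq ι] (hv : Injective v)
    (hflip : ∀ a b, v a ≠ v b → ∃ i c, v a i ≠ v b i ∧ v c = update (v a) i (v b i)) (a b : V) :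
    ∃ p : (flipGraph v).Walk a b, ∀ x ∈ p.support, ∀ j, v x j = v a j ∨ v x j = v b j := by
  induction hn : hammingDist (v a) (v b) using Nat.strong_induction_on generalizing a with
  | _ n ih =>
  by_cases hab : v a = v b
  · obtain rfl := hv hab
    exact ⟨.nil, by simp⟩
  obtain ⟨i, c, hi, hc⟩ := hflip a b hab
  have hac : (flipGraph v).Adj a c :=
    ⟨i, by simpa [hc] using hi, fun j hj => by simp [hc, hj]⟩
  obtain ⟨p, hp⟩ := ih _ (hn ▸ hc ▸ hammingDist_update_lt hi) c rfl
  refine ⟨.cons hac p, ?_⟩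
  simp only [Walk.support_cons, List.mem_cons, forall_eq_or_imp]
  refine ⟨fun j => by simp, fun x hx j => ?_⟩
  rcases hp x hx j with h | h
  · rcases eq_or_ne j i with rfl | hj
    · simp [h, hc]
    · simp [h, hc, hj]
  · exact .inr h

theorem preconnected_induce_flipGraph [Fintype ι] [DecidableEq ι] (hv : Injective v)
    (hflip : ∀ a b, v a ≠ v b → ∃ i c, v a i ≠ v b i ∧ v c = update (v a) i (v b i))
    {s : Set V} (hs : ∀ a b c, a ∈ s → b ∈ s → (∀ j, v c j = v a j ∨ v c j = v b j) → c ∈ s) :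
    ((flipGraph v).induce s).Preconnected := by
  rintro ⟨a, ha⟩ ⟨b, hb⟩
  obtain ⟨p, hp⟩ := exists_walk_flipGraph hv hflip a b
  exact ⟨p.induce s fun x hx => hs a b x ha hb (hp x hx)⟩

theorem isTree_flipGraph [Fintype ι] [DecidableEq ι] [Nonempty V] (hv : Injective v)
    (hflip : ∀ a b, v a ≠ v b → ∃ i c, v a i ≠ v b i ∧ v c = update (v a) i (v b i))
    (hagree : ∀ a b c d i, FlipAt (v a) (v b) i → FlipAt (v c) (v d) i →
      ∀ j, j ≠ i → v a j = v c j) :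
    (flipGraph v).IsTree :=
  ⟨(connected_iff _).2 ⟨fun a b => (exists_walk_flipGraph hv hflip a b).elim fun p _ => ⟨p⟩,
    inferInstance⟩, isAcyclic_flipGraph hv hagree⟩

section Distance

variable [Fintype ι]

def flipDist (w : ι → ℝ) (x y : ι → Bool) : ℝ :=
  ∑ i, if x i = true ∧ y i = false then w i else 0

open Classical in
noncomputable def cutDist (E : ι → Set S × Set S) (w : ι → ℝ) (s t : S) : ℝ :=
  ∑ i, if s ∈ (E i).1 ∧ t ∈ (E i).2 then w i else 0

variable {E : ι → Set S × Set S} {w : ι → ℝ}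

lemma flipDist_add_flipDist {x y z : ι → Bool} (h : ∀ i, y i = x i ∨ y i = z i) :
    flipDist w x y + flipDist w y z = flipDist w x z := by
  rw [flipDist, flipDist, flipDist, ← sum_add_distrib]
  refine sum_congr rfl fun i _ => ?_
  rcases h i with e | e <;> rw [e] <;> cases x i <;> cases z i <;> simp

lemma FlipAt.decide_exists {x y : ι → Bool} {i : ι} (h : FlipAt x y i) :
    decide (∃ j, x j = true ∧ y j = false) = x i := by
  cases hxi : x i
  · simp only [decide_eq_false_iff_not, not_exists, not_and]
    intro j hxj hyj
    rcases eq_or_ne j i with rfl | hj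
    · simp_all
    · simp_all [h.2 j hj]
  · simpa using ⟨i, hxi, by simpa [hxi] using h.apply_eq_not⟩

lemma FlipAt.flipDist_eq {x y : ι → Bool} {i : ι} (h : FlipAt x y i) :
    flipDist w x y = if x i = true then w i else 0 := by
  rw [flipDist, sum_eq_single i]
  · simp [h.apply_eq_not]
  · intro j _ hj
    simp [h.2 j hj]
  · simp

lemma FlipAt.sum_ite_ne {x y : ι → Bool} {i : ι} (h : FlipAt x y i) :
    ∑ j, (if x j ≠ y j then w j else 0) = w i := by
  rw [sum_eq_single i]
  · simp [h.1]
  · intro j _ hj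
    simp [h.2 j hj]
  · simp

theorem flipDist_eq_sum_darts (hv : Injective v)
    (hagree : ∀ a b c d i, FlipAt (v a) (v b) i → FlipAt (v c) (v d) i →
      ∀ j, j ≠ i → v a j = v c j)
    {a b : V} (p : (flipGraph v).Walk a b) (hp : p.IsPath) :
    flipDist w (v a) (v b) = (p.darts.map fun d => flipDist w (v d.fst) (v d.snd)).sum := by
  induction p with
  | nil => simp [flipDist]
  | @cons a c b h q ih =>
    obtain ⟨hq, ha⟩ := (Walk.cons_isPath_iff h q).1 hp
    simp only [Walk.darts_cons, List.map_cons, List.sum_cons, ← ih hq]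
    obtain ⟨i, hac⟩ := h
    -- the rest of the path does not flip `i` again: that would need the edge `s(a, c)`
    have hcb : v c i = v b i := by
      by_contra hne
      obtain ⟨d, hd, hdi⟩ := q.exists_dart_ne (f := fun x => v x i) hne
      have hedge : s(a, c) ∈ q.edges := by
        rw [flipGraph_edge_eq hv hagree hac (flipAt_of_dart d hdi)]
        exact List.mem_map_of_mem hd
      exact ha (q.fst_mem_support_of_mem_edges hedge)
    rw [flipDist_add_flipDist]
    intro j
    rcases eq_or_ne j i with rfl | hj
    exacts [.inr hcb, .inl (hac.2 j hj).symm]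

lemma cutDist_le_flipDist (hw : ∀ i, 0 ≤ w i) {s t : S} {x y : ι → Bool} (hx : Respects E s x)
    (hy : Respects E t y) : cutDist E w s t ≤ flipDist w x y := by
  refine sum_le_sum fun i _ => ?_
  split_ifs with h₁ h₂ h₂
  · exact le_rfl
  · exact absurd ⟨(hx i).1 h₁.1, (hy i).2 h₁.2⟩ h₂
  · exact hw i
  · exact le_rfl

lemma flipDist_pin (hd : ∀ i, Disjoint (E i).1 (E i).2) (s t : S) (σ : ι → Bool) :
    flipDist w (pin E s (pin E t (pin E s σ))) (pin E t (pin E s σ)) = cutDist E w s t := by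
  refine sum_congr rfl fun i _ => ?_
  have hs : s ∈ (E i).1 → s ∉ (E i).2 := fun h => Set.disjoint_left.1 (hd i) h
  have ht : t ∈ (E i).1 → t ∉ (E i).2 := fun h => Set.disjoint_left.1 (hd i) h
  by_cases hs₁ : s ∈ (E i).1 <;> by_cases hs₂ : s ∈ (E i).2 <;> by_cases ht₁ : t ∈ (E i).1 <;>
    by_cases ht₂ : t ∈ (E i).2 <;> simp_all [pin]

end Distance

def IsOrientedTreeRealization (G : SimpleGraph V) (μ : S → S → ℝ) : Prop :=
  G.IsTree ∧
    ∃ (dir : V → V → Bool) (α' : V → V → ℝ) (D : V → V → ℝ) (F : S → Set V),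
      (∀ u v, G.Adj u v → (dir u v = !dir v u)) ∧
      (∀ u v, 0 ≤ α' u v) ∧ (∀ u v, α' u v = α' v u) ∧
      (∀ (u v : V) (w : G.Walk u v), w.IsPath →
        D u v = (w.darts.map (fun d =>
          if dir d.toProd.1 d.toProd.2 then α' d.toProd.1 d.toProd.2 else 0)).sum) ∧
      (∀ s, (F s).Nonempty ∧ (G.induce (F s)).Connected) ∧
      (∀ s t, μ s t = sInf {x : ℝ | ∃ u ∈ F s, ∃ v ∈ F t, x = D u v})

lemma isLeast_cutDist [Fintype ι] {E : ι → Set S × Set S} (hd : ∀ i, Disjoint (E i).1 (E i).2)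
    {w : ι → ℝ} (hw : ∀ i, 0 ≤ w i) (hrange : ∀ σ, Consistent E σ ↔ σ ∈ Set.range v)
    {σ₀ : ι → Bool} (hσ₀ : Consistent E σ₀) (s t : S) :
    IsLeast {x : ℝ | ∃ u ∈ {a | Respects E s (v a)}, ∃ u' ∈ {a | Respects E t (v a)},
      x = flipDist w (v u) (v u')} (cutDist E w s t) := by
  obtain ⟨u, hu⟩ := (hrange _).1 (((hσ₀.pin hd s).pin hd t).pin hd s)
  obtain ⟨u', hu'⟩ := (hrange _).1 ((hσ₀.pin hd s).pin hd t)
  refine ⟨⟨u, ?_, u', ?_, ?_⟩, ?_⟩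
  · exact (hu ▸ respects_pin hd _ _ : Respects E s (v u))
  · exact (hu' ▸ respects_pin hd _ _ : Respects E t (v u'))
  · rw [hu, hu', flipDist_pin hd]
  · rintro x ⟨a, ha, b, hb, rfl⟩
    exact cutDist_le_flipDist hw ha hb

theorem isOrientedTreeRealization_flipGraph [Fintype ι] [DecidableEq ι]
    {E : ι → Set S × Set S} (hinj : Injective E) (hd : ∀ i, Disjoint (E i).1 (E i).2)
    (hne : ∀ i, (E i).1.Nonempty ∧ (E i).2.Nonempty) (hl : ∀ i j, LaminarPair (E i) (E j))
    {w : ι → ℝ} (hw : ∀ i, 0 ≤ w i) (hv : Injective v)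
    (hrange : ∀ σ, Consistent E σ ↔ σ ∈ Set.range v) :
    IsOrientedTreeRealization (flipGraph v) (cutDist E w) := by
  have hcons (a : V) : Consistent E (v a) := (hrange _).2 ⟨a, rfl⟩
  have hflip (a b : V) (hab : v a ≠ v b) :
      ∃ i c, v a i ≠ v b i ∧ v c = update (v a) i (v b i) := by
    obtain ⟨i, hi, hc⟩ := (hcons a).exists_flip (hcons b) hab
    obtain ⟨c, hc⟩ := (hrange _).1 hc
    exact ⟨i, c, hi, hc⟩
  have hagree (a b c d : V) (i : ι) (hab : FlipAt (v a) (v b) i) (hcd : FlipAt (v c) (v d) i)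
      (j : ι) (hj : j ≠ i) : v a j = v c j :=
    (hcons a).eq_of_flipAt hinj hl (hcons b) (hcons c) (hcons d) hab hcd hj
  obtain ⟨σ₀, hσ₀⟩ := exists_consistent hd hne
  have : Nonempty V := ⟨((hrange σ₀).1 hσ₀).choose⟩
  refine ⟨isTree_flipGraph hv hflip hagree,
    fun a b => decide (∃ i, v a i = true ∧ v b i = false),
    fun a b => ∑ i, if v a i ≠ v b i then w i else 0,
    fun a b => flipDist w (v a) (v b), fun s => {a | Respects E s (v a)}, ?_, ?_, ?_, ?_, ?_, ?_⟩
  · rintro a b ⟨i, h⟩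
    dsimp only
    rw [h.decide_exists, h.symm.decide_exists, Bool.eq_not.2 h.1]
  · exact fun a b => sum_nonneg fun i _ => by split_ifs <;> simp [hw i]
  · exact fun a b => sum_congr rfl fun i _ => by simp only [ne_comm]
  · intro a b p hp
    dsimp only
    rw [flipDist_eq_sum_darts hv hagree p hp]
    refine congrArg List.sum (List.map_congr_left fun d _ => ?_)
    obtain ⟨i, h⟩ := d.adj
    simp only [h.decide_exists, h.flipDist_eq, h.sum_ite_ne]
  · intro s
    obtain ⟨a, ha⟩ := (hrange _).1 (hσ₀.pin hd s)
    have haF : Respects E s (v a) := ha ▸ respects_pin hd s σ₀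
    exact ⟨⟨a, haF⟩, (connected_iff _).2 ⟨preconnected_induce_flipGraph hv hflip
      fun _ _ _ hx hy hz => hx.of_forall_eq_or_eq hy hz, ⟨⟨a, haF⟩⟩⟩⟩
  · exact fun s t => (isLeast_cutDist hd hw hrange hσ₀ s t).csInf_eq.symm

open Classical in
lemma sum_mul_boole_eq_cutDist (𝒜 : Finset (Set S × Set S)) (α : Set S × Set S → ℝ) (s t : S) :
    ∑ P ∈ 𝒜, α P * (if s ∈ P.1 ∧ t ∈ P.2 then 1 else 0) =
      cutDist (ι := 𝒜.filter fun P => P.1.Nonempty ∧ P.2.Nonempty) Subtype.val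
        (fun P => α P) s t := by
  rw [cutDist, sum_coe_sort (𝒜.filter _) fun P => if s ∈ P.1 ∧ t ∈ P.2 then α P else 0,
    sum_filter_of_ne]
  · simp_rw [mul_boole]
  · intro P _ h
    by_contra hP
    exact h (if_neg fun hst => hP ⟨⟨s, hst.1⟩, ⟨t, hst.2⟩⟩)

end LaminarCutRealization

open Classical in
theorem stmt_15_general {S : Type*}
    (𝒜 : Finset (Set S × Set S))
    (hdisj : ∀ P ∈ 𝒜, Disjoint P.1 P.2)
    (hlam : ∀ P ∈ 𝒜, ∀ Q ∈ 𝒜, LaminarPair P Q)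
    (α : Set S × Set S → ℝ) (hα : ∀ P ∈ 𝒜, 0 < α P)
    (μ : S → S → ℝ)
    (hμ : ∀ s t, μ s t = ∑ P ∈ 𝒜, α P * (if s ∈ P.1 ∧ t ∈ P.2 then 1 else 0)) :
    ∃ (n : ℕ) (G : SimpleGraph (Fin n)), G.IsTree ∧
      ∃ (dir : Fin n → Fin n → Bool) (α' : Fin n → Fin n → ℝ)
        (D : Fin n → Fin n → ℝ) (F : S → Set (Fin n)),
        (∀ u v, G.Adj u v → (dir u v = !dir v u)) ∧
        (∀ u v, 0 ≤ α' u v) ∧ (∀ u v, α' u v = α' v u) ∧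
        (∀ (u v : Fin n) (w : G.Walk u v), w.IsPath →
          D u v = (w.darts.map (fun d =>
            if dir d.toProd.1 d.toProd.2 then α' d.toProd.1 d.toProd.2 else 0)).sum) ∧
        (∀ s, (F s).Nonempty ∧ (G.induce (F s)).Connected) ∧
        (∀ s t, μ s t = sInf {x : ℝ | ∃ u ∈ F s, ∃ v ∈ F t, x = D u v}) := by
  open LaminarCutRealization in
  classical
  let ι := 𝒜.filter fun P => P.1.Nonempty ∧ P.2.Nonempty
  have hι (P : ι) : P.1 ∈ 𝒜 ∧ P.1.1.Nonempty ∧ P.1.2.Nonempty := Finset.mem_filter.1 P.2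
  obtain rfl : μ = cutDist (ι := ι) Subtype.val fun P => α P :=
    funext₂ fun s t => (hμ s t).trans (sum_mul_boole_eq_cutDist 𝒜 α s t)
  let e := Finite.equivFin {σ : ι → Bool // Consistent Subtype.val σ}
  exact ⟨_, flipGraph fun a => (e.symm a).1, isOrientedTreeRealization_flipGraph
    Subtype.val_injective (fun P => hdisj _ (hι P).1) (fun P => (hι P).2)
    (fun P Q => hlam _ (hι P).1 _ (hι Q).1) (fun P => (hα _ (hι P).1).le)
    (Subtype.val_injective.comp e.symm.injective)
    fun σ => ⟨fun h => ⟨e ⟨σ, h⟩, by simp⟩, by rintro ⟨a, rfl⟩; exact (e.symm a).2⟩⟩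

open Classical in
/-- a directed distance that is a positive combination of the cut
distances of a laminar family of partial cuts has an oriented-tree realization.
The oriented tree is a tree `G` on `Fin n` with an orientation `dir`, edge
lengths `α'`, tree distance `D` (sum of forward edge lengths on the unique
path), and subtrees `F s` (nonempty sets inducing connected subgraphs), with
`μ(s,t) = min { D u v : u ∈ F s, v ∈ F t }`. -/
theorem stmt_15 {S : Type*} [Fintype S]
    (𝒜 : Finset (Set S × Set S))
    (hdisj : ∀ P ∈ 𝒜, Disjoint P.1 P.2)
    (hlam : ∀ P ∈ 𝒜, ∀ Q ∈ 𝒜, LaminarPair P Q)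
    (α : Set S × Set S → ℝ) (hα : ∀ P ∈ 𝒜, 0 < α P)
    (μ : S → S → ℝ)
    (hμ : ∀ s t, μ s t = ∑ P ∈ 𝒜, α P * (if s ∈ P.1 ∧ t ∈ P.2 then 1 else 0)) :
    ∃ (n : ℕ) (G : SimpleGraph (Fin n)), G.IsTree ∧
      ∃ (dir : Fin n → Fin n → Bool) (α' : Fin n → Fin n → ℝ)
        (D : Fin n → Fin n → ℝ) (F : S → Set (Fin n)),
        (∀ u v, G.Adj u v → (dir u v = !dir v u)) ∧
        (∀ u v, 0 ≤ α' u v) ∧ (∀ u v, α' u v = α' v u) ∧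
        (∀ (u v : Fin n) (w : G.Walk u v), w.IsPath →
          D u v = (w.darts.map (fun d =>
            if dir d.toProd.1 d.toProd.2 then α' d.toProd.1 d.toProd.2 else 0)).sum) ∧
        (∀ s, (F s).Nonempty ∧ (G.induce (F s)).Connected) ∧
        (∀ s t, μ s t = sInf {x : ℝ | ∃ u ∈ F s, ∃ v ∈ F t, x = D u v}) :=
  stmt_15_general 𝒜 hdisj hlam α hα μ hμ
end

section
/- Let Γ be an oriented tree with nonnegative edge lengths α and {F_s}_{s∈S} a family of subtrees realizing the directed distance μ on S, i.e., μ(s,t) = D_{Γ,α}(F_s,F_t). For each edge e ∈ EΓ, deletion of e yields a partial cut (A_e,B_e) on S, where A_e (resp. B_e) consists of those s with F_s entirely in the component containing the tail (resp. head) of e. Then μ = ∑_{e ∈ EΓ} α(e) δ_{A_e,B_e}. -/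
/-!
Call a forward edge `(a, b)` separating if deleting it leaves `F s` on the side of `a` and `F t`
on the side of `b`. In a tree every path from `F s` to `F t` must cross each separating edge
forward, so, lengths being nonnegative, `D u v` is at least the total length of the separating
edges. Conversely, a shortest path between the two subtrees meets them only at its ends; as the
subtrees are connected, deleting any edge of this path leaves each of them on one side, so every
forward edge of the path is separating and the bound is attained.
-/

namespace SimpleGraph

variable {V : Type*} {G : SimpleGraph V}

theorem IsAcyclic.not_reachable_deleteEdges (hG : G.IsAcyclic) {a b : V} (hab : G.Adj a b) :
    ¬(G.deleteEdges {s(a, b)}).Reachable a b :=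
  isAcyclic_iff_forall_adj_isBridge.mp hG hab

theorem Walk.IsPath.reachable_deleteEdges_of_mem_darts {d : G.Dart} :
    ∀ {u v : V} {p : G.Walk u v}, p.IsPath → d ∈ p.darts →
      (G.deleteEdges {d.edge}).Reachable u d.fst ∧ (G.deleteEdges {d.edge}).Reachable d.snd v
  | _, _, .nil, _, hd => by simp at hd
  | u, _, .cons (v := x) h q, hp, hd => by
    rw [Walk.cons_isPath_iff] at hp
    rw [Walk.darts_cons, List.mem_cons] at hd
    rcases hd with rfl | hd
    · exact ⟨.rfl,
        (q.toDeleteEdge _ fun he => hp.2 (q.fst_mem_support_of_mem_edges he)).reachable⟩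
    · obtain ⟨hfst, hsnd⟩ := hp.1.reachable_deleteEdges_of_mem_darts hd
      have hne : s(u, x) ≠ d.edge := fun he =>
        hp.2 (q.fst_mem_support_of_mem_edges (he ▸ List.mem_map_of_mem (f := Dart.edge) hd :))
      exact ⟨(deleteEdges_adj.mpr ⟨h, hne⟩).reachable.trans hfst, hsnd⟩

theorem IsAcyclic.dart_mem_darts_of_reachable_deleteEdges (hG : G.IsAcyclic) {a b u v : V}
    (hab : G.Adj a b) (hau : (G.deleteEdges {s(a, b)}).Reachable a u)
    (hbv : (G.deleteEdges {s(a, b)}).Reachable b v) {p : G.Walk u v} (hp : p.IsPath) :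
    ⟨(a, b), hab⟩ ∈ p.darts := by
  have hmem : s(a, b) ∈ p.edges := by
    by_contra h
    exact hG.not_reachable_deleteEdges hab
      (hau.trans (((p.toDeleteEdge _ h).reachable).trans hbv.symm))
  obtain ⟨d, hd, hde⟩ := List.mem_map.mp hmem
  rcases dart_edge_eq_mk'_iff.mp hde with h | h
  · rwa [← Dart.ext d ⟨(a, b), hab⟩ h]
  · have hua := (hp.reachable_deleteEdges_of_mem_darts hd).1
    rw [hde, show d.fst = b from congrArg Prod.fst h] at hua
    exact absurd (hau.trans hua) (hG.not_reachable_deleteEdges hab)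

theorem reachable_deleteEdges_of_induce_preconnected {F : Set V} (hF : (G.induce F).Preconnected)
    {x y z : V} (hx : x ∈ F) (hy : y ∈ F) {e : Sym2 V} (hze : z ∈ e) (hzF : z ∉ F) :
    (G.deleteEdges {e}).Reachable x y := by
  obtain ⟨q⟩ := hF ⟨x, hx⟩ ⟨y, hy⟩
  set q' := q.map (Embedding.induce F).toHom
  have hsupp : ∀ w ∈ q'.support, w ∈ F := by
    simp only [q', Walk.support_map, List.mem_map]
    rintro _ ⟨⟨w, hw⟩, -, rfl⟩
    exact hw
  exact (q'.toDeleteEdge e fun he =>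
    hzF (hsupp z (Walk.mem_support_of_mem_edges he hze))).reachable

theorem Walk.eq_of_mem_support_of_dist_le {u v x : V} {p : G.Walk u v}
    (hp : p.length = G.dist u v) (hx : x ∈ p.support) (hxv : G.dist u v ≤ G.dist x v) : x = u := by
  obtain ⟨q, r, rfl⟩ := Walk.mem_support_iff_exists_append.mp hx
  have : q.length = 0 := by
    have := dist_le r
    rw [Walk.length_append] at hp
    omega
  exact (Walk.eq_of_length_eq_zero this).symm

theorem Connected.exists_isPath_meeting_sets_only_at_ends [Finite V] (hG : G.Connected)
    {A B : Set V} (hA : A.Nonempty) (hB : B.Nonempty) :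
    ∃ u ∈ A, ∃ v ∈ B, ∃ p : G.Walk u v, p.IsPath ∧
      (∀ x ∈ p.support, x ∈ A → x = u) ∧ (∀ x ∈ p.support, x ∈ B → x = v) := by
  obtain ⟨⟨u, v⟩, ⟨hu, hv⟩, hmin⟩ :=
    (A ×ˢ B).exists_min_image (fun x => G.dist x.1 x.2) (Set.toFinite _) (hA.prod hB)
  obtain ⟨p, hp, hlen⟩ := hG.exists_path_of_dist u v
  refine ⟨u, hu, v, hv, p, hp, fun x hx hxA => ?_, fun x hx hxB => ?_⟩
  · exact p.eq_of_mem_support_of_dist_le hlen hx (hmin (x, v) ⟨hxA, hv⟩)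
  · refine p.reverse.eq_of_mem_support_of_dist_le ?_ (by simpa using hx) ?_
    · rw [Walk.length_reverse, hlen, dist_comm]
    · rw [dist_comm, dist_comm (u := x)]
      exact hmin (u, x) ⟨hu, hxB⟩

theorem IsAcyclic.reachable_deleteEdges_fst_of_mem_darts (hG : G.IsAcyclic) {F : Set V}
    (hF : (G.induce F).Preconnected) {u v w : V} {p : G.Walk u v} (hp : p.IsPath) (hu : u ∈ F)
    (hpF : ∀ x ∈ p.support, x ∈ F → x = u) {d : G.Dart} (hd : d ∈ p.darts) (hw : w ∈ F) :
    (G.deleteEdges {d.edge}).Reachable d.fst w := by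
  have hud := (hp.reachable_deleteEdges_of_mem_darts hd).1
  have hsnd : d.snd ∉ F := fun h => by
    rw [← hpF _ (p.dart_snd_mem_support_of_mem_darts hd) h] at hud
    exact hG.not_reachable_deleteEdges d.adj hud.symm
  exact hud.symm.trans
    (reachable_deleteEdges_of_induce_preconnected hF hu hw (Sym2.mem_mk_right _ _) hsnd)

theorem IsAcyclic.reachable_deleteEdges_snd_of_mem_darts (hG : G.IsAcyclic) {F : Set V}
    (hF : (G.induce F).Preconnected) {u v w : V} {p : G.Walk u v} (hp : p.IsPath) (hv : v ∈ F)
    (hpF : ∀ x ∈ p.support, x ∈ F → x = v) {d : G.Dart} (hd : d ∈ p.darts) (hw : w ∈ F) :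
    (G.deleteEdges {d.edge}).Reachable d.snd w := by
  have hd' : d.symm ∈ p.reverse.darts := by simpa using hd
  simpa using hG.reachable_deleteEdges_fst_of_mem_darts hF hp.reverse hv (by simpa using hpF) hd' hw

theorem Walk.IsPath.sum_ite_eq_sum_darts {M : Type*} [AddCommMonoid M] [Fintype V]
    {P : V → V → Prop} [DecidableRel P] (f : V → V → M) {u v : V} {p : G.Walk u v}
    (hp : p.IsPath) (hP : ∀ a b, P a b → ∃ h : G.Adj a b, ⟨(a, b), h⟩ ∈ p.darts) :
    ∑ a, ∑ b, (if P a b then f a b else 0) =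
      (p.darts.map fun d => if P d.fst d.snd then f d.fst d.snd else 0).sum := by
  classical
  set g : V × V → M := fun x => if P x.1 x.2 then f x.1 x.2 else 0
  have hnodup : (p.darts.map Dart.toProd).Nodup :=
    (darts_nodup_of_support_nodup hp.support_nodup).map Dart.toProd_injective
  calc ∑ a, ∑ b, (if P a b then f a b else 0)
      = ∑ x ∈ (p.darts.map Dart.toProd).toFinset, g x := by
        rw [← Fintype.sum_prod_type']
        refine (Finset.sum_subset (Finset.subset_univ _) fun x _ hx => ?_).symm
        refine if_neg fun hPx => hx ?_
        obtain ⟨h, hmem⟩ := hP x.1 x.2 hPx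
        exact List.mem_toFinset.mpr (List.mem_map_of_mem (f := Dart.toProd) hmem)
    _ = _ := by rw [List.sum_toFinset g hnodup, List.map_map]; rfl

theorem Walk.IsPath.sum_ite_le_sum_darts_ite {M : Type*} [AddCommMonoid M] [PartialOrder M]
    [IsOrderedAddMonoid M] [Fintype V] {P Q : V → V → Prop} [DecidableRel P] [DecidableRel Q]
    {f : V → V → M} (hf : ∀ a b, 0 ≤ f a b) (hPQ : ∀ a b, P a b → Q a b) {u v : V}
    {p : G.Walk u v} (hp : p.IsPath) (hP : ∀ a b, P a b → ∃ h : G.Adj a b, ⟨(a, b), h⟩ ∈ p.darts) :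
    ∑ a, ∑ b, (if P a b then f a b else 0) ≤
      (p.darts.map fun d => if Q d.fst d.snd then f d.fst d.snd else 0).sum := by
  rw [hp.sum_ite_eq_sum_darts f hP]
  refine List.sum_le_sum fun d _ => ?_
  by_cases hPd : P d.fst d.snd
  · rw [if_pos hPd, if_pos (hPQ _ _ hPd)]
  · rw [if_neg hPd]
    split_ifs
    exacts [hf _ _, le_rfl]

theorem Walk.IsPath.sum_ite_eq_sum_darts_ite {M : Type*} [AddCommMonoid M] [Fintype V]
    {P Q : V → V → Prop} [DecidableRel P] [DecidableRel Q] (f : V → V → M)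
    (hPQ : ∀ a b, P a b → Q a b) {u v : V} {p : G.Walk u v} (hp : p.IsPath)
    (hP : ∀ a b, P a b → ∃ h : G.Adj a b, ⟨(a, b), h⟩ ∈ p.darts)
    (hQ : ∀ d ∈ p.darts, Q d.fst d.snd → P d.fst d.snd) :
    ∑ a, ∑ b, (if P a b then f a b else 0) =
      (p.darts.map fun d => if Q d.fst d.snd then f d.fst d.snd else 0).sum := by
  rw [hp.sum_ite_eq_sum_darts f hP]
  exact congrArg List.sum
    (List.map_congr_left fun d hd => if_congr ⟨hPQ _ _, hQ d hd⟩ rfl rfl)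

end SimpleGraph

open Classical in
theorem stmt_16_general {V S : Type*} [Fintype V]
    (G : SimpleGraph V) (hG : G.IsTree)
    (dir : V → V → Bool)
    (α : V → V → ℝ) (hα0 : ∀ u v, 0 ≤ α u v)
    (D : V → V → ℝ)
    (hD : ∀ (u v : V) (w : G.Walk u v), w.IsPath →
      D u v = (w.darts.map (fun d =>
        if dir d.toProd.1 d.toProd.2 then α d.toProd.1 d.toProd.2 else 0)).sum)
    (F : S → Set V)
    (hF : ∀ s, (F s).Nonempty ∧ (G.induce (F s)).Connected)
    (μ : S → S → ℝ)
    (hμ : ∀ s t, μ s t = sInf {x : ℝ | ∃ u ∈ F s, ∃ v ∈ F t, x = D u v}) :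
    ∀ s t : S, μ s t =
      ∑ a : V, ∑ b : V,
        if G.Adj a b ∧ dir a b = true ∧
            (∀ w ∈ F s, (G.deleteEdges {s(a, b)}).Reachable a w) ∧
            (∀ w ∈ F t, (G.deleteEdges {s(a, b)}).Reachable b w)
        then α a b else 0 := by
  intro s t
  set P : V → V → Prop := fun a b => G.Adj a b ∧ dir a b = true ∧
    (∀ w ∈ F s, (G.deleteEdges {s(a, b)}).Reachable a w) ∧
    (∀ w ∈ F t, (G.deleteEdges {s(a, b)}).Reachable b w)
  have hPdir : ∀ a b, P a b → dir a b = true := fun _ _ h => h.2.1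
  have hPdarts : ∀ u ∈ F s, ∀ v ∈ F t, ∀ p : G.Walk u v, p.IsPath →
      ∀ a b, P a b → ∃ h : G.Adj a b, ⟨(a, b), h⟩ ∈ p.darts := fun u hu v hv p hp a b hab =>
    ⟨hab.1, hG.isAcyclic.dart_mem_darts_of_reachable_deleteEdges hab.1 (hab.2.2.1 u hu)
      (hab.2.2.2 v hv) hp⟩
  obtain ⟨u, hu, v, hv, p, hp, hpu, hpv⟩ :=
    hG.connected.exists_isPath_meeting_sets_only_at_ends (hF s).1 (hF t).1
  have hforward : ∀ d ∈ p.darts, dir d.fst d.snd = true → P d.fst d.snd := fun d hd hdir =>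
    ⟨d.adj, hdir,
      fun _ hw => hG.isAcyclic.reachable_deleteEdges_fst_of_mem_darts
        (hF s).2.preconnected hp hu hpu hd hw,
      fun _ hw => hG.isAcyclic.reachable_deleteEdges_snd_of_mem_darts
        (hF t).2.preconnected hp hv hpv hd hw⟩
  rw [hμ]
  refine IsLeast.csInf_eq ⟨⟨u, hu, v, hv, ?_⟩, ?_⟩
  · rw [hD u v p hp, hp.sum_ite_eq_sum_darts_ite α hPdir (hPdarts u hu v hv p hp) hforward]
  · rintro _ ⟨u', hu', v', hv', rfl⟩
    obtain ⟨p', hp'⟩ := (hG.connected u' v').exists_isPath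
    rw [hD u' v' p' hp']
    exact hp'.sum_ite_le_sum_darts_ite hα0 hPdir (hPdarts u' hu' v' hv' p' hp')

open Classical in
/-- an oriented-tree realization `(Γ,α,{F_s})` of μ yields the
cut decomposition `μ = ∑_e α(e) δ_{A_e,B_e}`, where for the oriented edge
`(a,b)` (i.e. `G.Adj a b` with `dir a b = true`), `A_e` consists of those `s`
with `F_s` entirely in the component of `a` after deleting the edge, and `B_e`
of those with `F_s` entirely in the component of `b`. -/
theorem stmt_16 {V S : Type*} [Fintype V]
    (G : SimpleGraph V) (hG : G.IsTree)
    (dir : V → V → Bool) (hdir : ∀ u v, G.Adj u v → (dir u v = !dir v u))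
    (α : V → V → ℝ) (hα0 : ∀ u v, 0 ≤ α u v) (hαsymm : ∀ u v, α u v = α v u)
    (D : V → V → ℝ)
    (hD : ∀ (u v : V) (w : G.Walk u v), w.IsPath →
      D u v = (w.darts.map (fun d =>
        if dir d.toProd.1 d.toProd.2 then α d.toProd.1 d.toProd.2 else 0)).sum)
    (F : S → Set V)
    (hF : ∀ s, (F s).Nonempty ∧ (G.induce (F s)).Connected)
    (μ : S → S → ℝ)
    (hμ : ∀ s t, μ s t = sInf {x : ℝ | ∃ u ∈ F s, ∃ v ∈ F t, x = D u v}) :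
    ∀ s t : S, μ s t =
      ∑ a : V, ∑ b : V,
        if G.Adj a b ∧ dir a b = true ∧
            (∀ w ∈ F s, (G.deleteEdges {s(a, b)}).Reachable a w) ∧
            (∀ w ∈ F t, (G.deleteEdges {s(a, b)}).Reachable b w)
        then α a b else 0 :=
  stmt_16_general G hG dir α hα0 D hD F hF μ hμ
end

section
/- Let d be a directed metric in 𝒟_{μ,S} = { directed metrics d on S : d(s,t) ≥ μ(s,t) for all s,t }. Define the equivalence relation x ∼ y iff d(x,y)=d(y,x)=0, and call an edge st extremal if there is no pair (u,v) outside the equivalence class of (s,t) with d(u,v) = d(u,s) + d(s,t) + d(t,v). Then d is minimal in 𝒟_{μ,S} (no d' ∈ 𝒟_{μ,S} with d' ≤ d, d' ≠ d) if and only if every extremal class [st] contains a pair (u,v) with d(u,v) = μ(u,v). -/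
/-!
If no pair of an extremal class `[st]` is tight (`d = μ`), lowering `d` by a small `ε > 0` on
`[st]` alone is still a directed metric above `μ`: extremality makes every triangle inequality
that routes through `[st]` strict, so `d` is not minimal. Conversely, if `d' ≤ d` is a smaller
directed metric above `μ`, a pair `(s,t)` with `d' s t < d s t` that maximizes `d s t`, and among
those minimizes the potential `∑ w, (d s w + d w t)`, is extremal; the inequality
`d' < d` then holds on all of `[st]`, which therefore contains no tight pair.
-/

section

variable {S : Type*}

structure IsDirectedMetric (d : S → S → ℝ) : Prop where
  nonneg : ∀ s t, 0 ≤ d s t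
  dist_self : ∀ s, d s s = 0
  triangle : ∀ s t u, d s u ≤ d s t + d t u

def DistEquiv (d : S → S → ℝ) (x y : S) : Prop := d x y = 0 ∧ d y x = 0

def IsExtremal (d : S → S → ℝ) (s t : S) : Prop :=
  ¬ ∃ u v : S, u ≠ v ∧ ¬ (DistEquiv d u s ∧ DistEquiv d v t) ∧
    d u v = d u s + d s t + d t v

open Classical in
noncomputable def lowerOnClass (d : S → S → ℝ) (s t : S) (ε : ℝ) : S → S → ℝ := fun u v =>
  if DistEquiv d u s ∧ DistEquiv d v t then d u v - ε else d u v

theorem exists_lt_forall_le_of_finite {ι α : Type*} [Finite ι] [LinearOrder α] [NoMaxOrder α]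
    {p : ι → Prop} {f : ι → α} {a : α} (hf : ∀ i, p i → a < f i) :
    ∃ b, a < b ∧ ∀ i, p i → b ≤ f i := by
  rcases ({i | p i} : Set ι).eq_empty_or_nonempty with hp | hp
  · obtain ⟨b, hb⟩ := exists_gt a
    exact ⟨b, hb, fun i hi => (Set.notMem_empty i (hp ▸ hi)).elim⟩
  · obtain ⟨i₀, hi₀, hmin⟩ := Set.exists_min_image _ f (Set.toFinite _) hp
    exact ⟨f i₀, hf i₀ hi₀, hmin⟩

variable {d : S → S → ℝ} {s t : S}

theorem IsDirectedMetric.distEquiv_refl (hd : IsDirectedMetric d) (x : S) : DistEquiv d x x :=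
  ⟨hd.dist_self x, hd.dist_self x⟩

theorem IsDirectedMetric.dist_eq_of_distEquiv (hd : IsDirectedMetric d) {u v : S}
    (hu : DistEquiv d u s) (hv : DistEquiv d v t) : d u v = d s t := by
  obtain ⟨hus, hsu⟩ := hu
  obtain ⟨hvt, htv⟩ := hv
  linarith [hd.triangle u s v, hd.triangle s t v, hd.triangle s u t, hd.triangle u v t]

theorem IsDirectedMetric.not_distEquiv_and_distEquiv (hd : IsDirectedMetric d)
    (hst : 0 < d s t) (x : S) : ¬ (DistEquiv d x s ∧ DistEquiv d x t) := by
  rintro ⟨⟨-, hsx⟩, ⟨hxt, -⟩⟩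
  linarith [hd.triangle s x t]

theorem IsExtremal.dist_lt_right (hext : IsExtremal d s t) (hd : IsDirectedMetric d)
    (hst : 0 < d s t) {c : S} (hc : ¬ DistEquiv d c t) : d s c < d s t + d t c := by
  refine (hd.triangle s t c).lt_of_ne fun h => ?_
  by_cases hsc : s = c
  · subst hsc
    linarith [hd.dist_self s, hd.nonneg t s]
  · exact hext ⟨s, c, hsc, fun h' => hc h'.2, by rw [hd.dist_self]; linarith⟩

theorem IsExtremal.dist_lt_left (hext : IsExtremal d s t) (hd : IsDirectedMetric d)
    (hst : 0 < d s t) {a : S} (ha : ¬ DistEquiv d a s) : d a t < d a s + d s t := by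
  refine (hd.triangle a s t).lt_of_ne fun h => ?_
  by_cases hat : a = t
  · subst hat
    linarith [hd.dist_self a, hd.nonneg a s]
  · exact hext ⟨a, t, hat, fun h' => ha h'.1, by rw [hd.dist_self]; linarith⟩

theorem isDirectedMetric_lowerOnClass (hd : IsDirectedMetric d) {ε : ℝ} (hε : 0 < ε)
    (hεst : ε ≤ d s t)
    (hright : ∀ c, ¬ DistEquiv d c t → ε ≤ d s t + d t c - d s c)
    (hleft : ∀ a, ¬ DistEquiv d a s → ε ≤ d a s + d s t - d a t) :
    IsDirectedMetric (lowerOnClass d s t ε) where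
  nonneg u v := by
    unfold lowerOnClass
    split_ifs with h
    · linarith [hd.dist_eq_of_distEquiv h.1 h.2]
    · exact hd.nonneg u v
  dist_self w := by
    rw [lowerOnClass, if_neg (hd.not_distEquiv_and_distEquiv (hε.trans_le hεst) w), hd.dist_self]
  triangle a b c := by
    have hb := hd.not_distEquiv_and_distEquiv (hε.trans_le hεst) b
    have habc := hd.triangle a b c
    unfold lowerOnClass
    by_cases hab : DistEquiv d a s ∧ DistEquiv d b t
    · have hbc : ¬ (DistEquiv d b s ∧ DistEquiv d c t) := fun h => hb ⟨h.1, hab.2⟩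
      rw [if_pos hab, if_neg hbc]
      split_ifs with hac
      · linarith
      · have hct : ¬ DistEquiv d c t := fun h => hac ⟨hab.1, h⟩
        linarith [hd.dist_eq_of_distEquiv hab.1 hab.2, hd.triangle a s c, hd.triangle t b c,
          hright c hct, hab.1.1, hab.2.2]
    rw [if_neg hab]
    by_cases hbc : DistEquiv d b s ∧ DistEquiv d c t
    · rw [if_pos hbc]
      split_ifs with hac
      · linarith
      · have has : ¬ DistEquiv d a s := fun h => hac ⟨h, hbc.2⟩
        linarith [hd.dist_eq_of_distEquiv hbc.1 hbc.2, hd.triangle a t c, hd.triangle a b s,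
          hleft a has, hbc.1.1, hbc.2.2]
    rw [if_neg hbc]
    split_ifs <;> linarith

theorem IsDirectedMetric.sum_lt_sum_of_dist_eq_zero [Fintype S] (hd : IsDirectedMetric d)
    {u v : S} (hus : d u s = 0) (htv : d t v = 0) (hne : ¬ (d s u = 0 ∧ d v t = 0)) :
    ∑ w, (d u w + d w v) < ∑ w, (d s w + d w t) := by
  have hle : ∀ w, d u w + d w v ≤ d s w + d w t := fun w => by
    linarith [hd.triangle u s w, hd.triangle w t v]
  refine Finset.sum_lt_sum (fun w _ => hle w) ?_
  rcases not_and_or.1 hne with hsu | hvt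
  · refine ⟨u, Finset.mem_univ u, ?_⟩
    have := (hd.nonneg s u).lt_of_ne (Ne.symm hsu)
    linarith [hd.dist_self u, hd.triangle u t v]
  · refine ⟨v, Finset.mem_univ v, ?_⟩
    have := (hd.nonneg v t).lt_of_ne (Ne.symm hvt)
    linarith [hd.dist_self v, hd.triangle u s v]

variable {μ : S → S → ℝ}

theorem IsExtremal.exists_lt_of_forall_ne [Finite S] (hext : IsExtremal d s t)
    (hd : IsDirectedMetric d) (hμ0 : ∀ s t, 0 ≤ μ s t) (hdμ : ∀ s t, μ s t ≤ d s t)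
    (hno : ∀ u v, DistEquiv d u s → DistEquiv d v t → d u v ≠ μ u v) :
    ∃ d', IsDirectedMetric d' ∧ (∀ u v, μ u v ≤ d' u v) ∧ (∀ u v, d' u v ≤ d u v) ∧ d' ≠ d := by
  have hst : 0 < d s t := (hd.nonneg s t).lt_of_ne fun h =>
    hno s t (hd.distEquiv_refl s) (hd.distEquiv_refl t) (by linarith [hμ0 s t, hdμ s t])
  obtain ⟨ε₁, hε₁, h₁⟩ := exists_lt_forall_le_of_finite
    (p := fun q : S × S => DistEquiv d q.1 s ∧ DistEquiv d q.2 t)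
    (f := fun q => d q.1 q.2 - μ q.1 q.2)
    fun q hq => sub_pos.2 ((hdμ _ _).lt_of_ne (hno _ _ hq.1 hq.2).symm)
  obtain ⟨ε₂, hε₂, h₂⟩ := exists_lt_forall_le_of_finite
    (f := fun c => d s t + d t c - d s c)
    fun c (hc : ¬ DistEquiv d c t) => sub_pos.2 (hext.dist_lt_right hd hst hc)
  obtain ⟨ε₃, hε₃, h₃⟩ := exists_lt_forall_le_of_finite
    (f := fun a => d a s + d s t - d a t)
    fun a (ha : ¬ DistEquiv d a s) => sub_pos.2 (hext.dist_lt_left hd hst ha)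
  set ε := min (min ε₁ ε₂) (min ε₃ (d s t))
  have hε : 0 < ε := lt_min (lt_min hε₁ hε₂) (lt_min hε₃ hst)
  have hε₁' : ε ≤ ε₁ := (min_le_left _ _).trans (min_le_left _ _)
  refine ⟨lowerOnClass d s t ε,
    isDirectedMetric_lowerOnClass hd hε ((min_le_right _ _).trans (min_le_right _ _))
      (fun c hc => ((min_le_left _ _).trans (min_le_right _ _)).trans (h₂ c hc))
      (fun a ha => ((min_le_right _ _).trans (min_le_left _ _)).trans (h₃ a ha)),
    fun u v => ?_, fun u v => ?_, fun h => ?_⟩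
  · unfold lowerOnClass
    split_ifs with h
    · linarith [h₁ (u, v) h]
    · exact hdμ u v
  · unfold lowerOnClass
    split_ifs <;> linarith
  · have hst' := congrFun (congrFun h s) t
    rw [lowerOnClass, if_pos ⟨hd.distEquiv_refl s, hd.distEquiv_refl t⟩] at hst'
    linarith

variable {d' : S → S → ℝ}

theorem dist_lt_of_dist_eq_add (htri' : ∀ s t u, d' s u ≤ d' s t + d' t u)
    (hle : ∀ s t, d' s t ≤ d s t) (hst : d' s t < d s t) {u v : S}
    (h : d u v = d u s + d s t + d t v) : d' u v < d u v := by
  linarith [htri' u s v, htri' s t v, hle u s, hle t v]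

theorem IsDirectedMetric.exists_isExtremal_lt [Fintype S] (hd : IsDirectedMetric d)
    (htri' : ∀ s t u, d' s u ≤ d' s t + d' t u) (hle : ∀ s t, d' s t ≤ d s t) (hne : d' ≠ d) :
    ∃ s t, IsExtremal d s t ∧ d' s t < d s t := by
  set T : Set (S × S) := {q | d' q.1 q.2 < d q.1 q.2}
  have hT : T.Nonempty := by
    by_contra hT
    exact hne (funext₂ fun u v => (hle u v).antisymm (not_lt.1 fun h => hT ⟨(u, v), h⟩))
  obtain ⟨⟨s, t⟩, hst, hmax⟩ := T.exists_max_image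
    (fun q => toLex (d q.1 q.2, -∑ w, (d q.1 w + d w q.2))) T.toFinite hT
  refine ⟨s, t, ?_, hst⟩
  rintro ⟨u, v, -, hnot, heq⟩
  obtain ⟨hle_st, htie⟩ :=
    Prod.Lex.toLex_le_toLex'.1 (hmax (u, v) (dist_lt_of_dist_eq_add htri' hle hst heq))
  have hus : d u s = 0 := by linarith [hd.nonneg u s, hd.nonneg t v]
  have htv : d t v = 0 := by linarith [hd.nonneg u s, hd.nonneg t v]
  have hpot := hd.sum_lt_sum_of_dist_eq_zero hus htv fun h =>
    hnot ⟨⟨hus, h.1⟩, ⟨h.2, htv⟩⟩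
  linarith [htie (by linarith)]

end

theorem stmt_17_general {S : Type*} [Fintype S]
    (μ : S → S → ℝ) (hμ0 : ∀ s t, 0 ≤ μ s t)
    (d : S → S → ℝ) (hd0 : ∀ s t, 0 ≤ d s t) (hddiag : ∀ s, d s s = 0)
    (hdtri : ∀ s t u, d s u ≤ d s t + d t u)
    (hdμ : ∀ s t, μ s t ≤ d s t) :
    letI sim : S → S → Prop := fun x y => d x y = 0 ∧ d y x = 0
    letI extremal : S → S → Prop := fun s t =>
      ¬ ∃ u v : S, u ≠ v ∧ ¬ (sim u s ∧ sim v t) ∧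
        d u v = d u s + d s t + d t v
    ((¬ ∃ d' : S → S → ℝ, (∀ s t, 0 ≤ d' s t) ∧ (∀ s, d' s s = 0) ∧
        (∀ s t u, d' s u ≤ d' s t + d' t u) ∧ (∀ s t, μ s t ≤ d' s t) ∧
        (∀ s t, d' s t ≤ d s t) ∧ d' ≠ d)
      ↔ (∀ s t : S, extremal s t →
          ∃ u v : S, sim u s ∧ sim v t ∧ d u v = μ u v)) := by
  have hd : IsDirectedMetric d := ⟨hd0, hddiag, hdtri⟩
  constructor
  · intro hmin s t hext
    by_contra! hno
    obtain ⟨d', ⟨h0', hdiag', htri'⟩, hμ', hle', hne'⟩ :=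
      IsExtremal.exists_lt_of_forall_ne hext hd hμ0 hdμ hno
    exact hmin ⟨d', h0', hdiag', htri', hμ', hle', hne'⟩
  · rintro hco ⟨d', -, -, htri', hμ', hle', hne'⟩
    obtain ⟨s, t, hext, hst⟩ := hd.exists_isExtremal_lt htri' hle' hne'
    obtain ⟨u, v, hu, hv, huv⟩ := hco s t hext
    have hlt := dist_lt_of_dist_eq_add htri' hle' hst (u := u) (v := v) (by
      rw [hd.dist_eq_of_distEquiv hu hv, hu.1, hv.2]; ring)
    linarith [hμ' u v]

/-- a directed metric `d ≥ μ` is minimal in `𝒟_{μ,S}` iff every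
extremal class contains a pair `(u,v)` with `d(u,v) = μ(u,v)`.  Here
`x ∼ y ↔ d(x,y)=d(y,x)=0`, the class of `(s,t)` is `{(u,v) : u∼s, v∼t}`, and
`(s,t)` is extremal iff no pair `(u,v)` outside its class with `u ≠ v`
satisfies `d(u,v) = d(u,s)+d(s,t)+d(t,v)`. -/
theorem stmt_17 {S : Type*} [Fintype S]
    (μ : S → S → ℝ) (hμ0 : ∀ s t, 0 ≤ μ s t) (hμdiag : ∀ s, μ s s = 0)
    (d : S → S → ℝ) (hd0 : ∀ s t, 0 ≤ d s t) (hddiag : ∀ s, d s s = 0)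
    (hdtri : ∀ s t u, d s u ≤ d s t + d t u)
    (hdμ : ∀ s t, μ s t ≤ d s t) :
    letI sim : S → S → Prop := fun x y => d x y = 0 ∧ d y x = 0
    letI extremal : S → S → Prop := fun s t =>
      ¬ ∃ u v : S, u ≠ v ∧ ¬ (sim u s ∧ sim v t) ∧
        d u v = d u s + d s t + d t v
    ((¬ ∃ d' : S → S → ℝ, (∀ s t, 0 ≤ d' s t) ∧ (∀ s, d' s s = 0) ∧
        (∀ s t u, d' s u ≤ d' s t + d' t u) ∧ (∀ s t, μ s t ≤ d' s t) ∧
        (∀ s t, d' s t ≤ d s t) ∧ d' ≠ d)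
      ↔ (∀ s t : S, extremal s t →
          ∃ u v : S, sim u s ∧ sim v t ∧ d u v = μ u v)) :=
  stmt_17_general μ hμ0 d hd0 hddiag hdtri hdμ
end

section
/- Let μ be a directed metric on a finite set S, and for s ∈ S let μ_s ∈ R^{S^c ∪ S^r} be defined by μ_s(t^c) = μ(t,s), μ_s(t^r) = μ(s,t). Then (T_μ)_s = {μ_s}: any minimal nonnegative point p of P_μ satisfying p(s^c) = p(s^r) = 0 equals μ_s. -/
/-!
The point `μ_s` lies in `P_μ` by the triangle inequality through `s`, and lies below `p`
because of the constraints of `P_μ` at the pairs `(t, s)` and `(s, t)`; minimality of `p`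
then forces `p = μ_s`.
-/

section MetricPoint

variable {S : Type*} (μ : S → S → ℝ) (s : S)

/-- The point `μ_s` of `ℝ^{S^c ∪ S^r}`, with `S^c` encoded by `Sum.inl` and `S^r` by `Sum.inr`. -/
def metricPoint : S ⊕ S → ℝ :=
  Sum.elim (fun t => μ t s) (fun t => μ s t)

variable {μ}

theorem metricPoint_nonneg (hμ0 : ∀ s t, 0 ≤ μ s t) (u : S ⊕ S) : 0 ≤ metricPoint μ s u := by
  cases u <;> exact hμ0 _ _

theorem le_metricPoint_add (hμtri : ∀ s t u, μ s u ≤ μ s t + μ t u) (t u : S) :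
    μ t u ≤ metricPoint μ s (Sum.inl t) + metricPoint μ s (Sum.inr u) :=
  hμtri t s u

theorem metricPoint_le {p : S ⊕ S → ℝ} (hp : ∀ t u : S, μ t u ≤ p (Sum.inl t) + p (Sum.inr u))
    (hps : p (Sum.inl s) = 0 ∧ p (Sum.inr s) = 0) : metricPoint μ s ≤ p := by
  rintro (t | t)
  · simpa [metricPoint, hps.2] using hp t s
  · simpa [metricPoint, hps.1] using hp s t

end MetricPoint

theorem stmt_18_general {S : Type*}
    (μ : S → S → ℝ) (hμ0 : ∀ s t, 0 ≤ μ s t)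
    (hμtri : ∀ s t u, μ s u ≤ μ s t + μ t u)
    (s : S) (p : S ⊕ S → ℝ)
    (hp : ∀ t u : S, μ t u ≤ p (Sum.inl t) + p (Sum.inr u))
    (hpmin : ¬ ∃ q : S ⊕ S → ℝ, (∀ u, 0 ≤ q u) ∧
      (∀ t u : S, μ t u ≤ q (Sum.inl t) + q (Sum.inr u)) ∧ q ≤ p ∧ q ≠ p)
    (hps : p (Sum.inl s) = 0 ∧ p (Sum.inr s) = 0) :
    p = Sum.elim (fun t => μ t s) (fun t => μ s t) := by
  by_contra hne
  exact hpmin ⟨metricPoint μ s, metricPoint_nonneg s hμ0, le_metricPoint_add s hμtri,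
    metricPoint_le s hp hps, fun h => hne h.symm⟩

/-- for a directed metric μ, `(T_μ)_s = {μ_s}`: any coordinatewise
minimal nonnegative point `p` of `P_μ` with `p(s^c) = p(s^r) = 0` equals
`μ_s`, where `μ_s(t^c) = μ(t,s)` and `μ_s(t^r) = μ(s,t)`. -/
theorem stmt_18 {S : Type*} [Fintype S]
    (μ : S → S → ℝ) (hμ0 : ∀ s t, 0 ≤ μ s t) (hμdiag : ∀ s, μ s s = 0)
    (hμtri : ∀ s t u, μ s u ≤ μ s t + μ t u)
    (s : S) (p : S ⊕ S → ℝ) (hp0 : ∀ u, 0 ≤ p u)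
    (hp : ∀ t u : S, μ t u ≤ p (Sum.inl t) + p (Sum.inr u))
    (hpmin : ¬ ∃ q : S ⊕ S → ℝ, (∀ u, 0 ≤ q u) ∧
      (∀ t u : S, μ t u ≤ q (Sum.inl t) + q (Sum.inr u)) ∧ q ≤ p ∧ q ≠ p)
    (hps : p (Sum.inl s) = 0 ∧ p (Sum.inr s) = 0) :
    p = Sum.elim (fun t => μ t s) (fun t => μ s t) :=
  stmt_18_general μ hμ0 hμtri s p hp hpmin hps
end
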